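/- arXiv:2009.02943 — 11 statements merged into one kernel-verified Lean document; each statement's English description precedes it below -/
import Mathlib

section
/- Let 0 < r₁ < r₂ < ∞, let C > 0, and let φ : [r₁,r₂] → (0,∞) be a C¹ weight with ∂_r φ(r) > 0 and φ(r) ≤ C·r·∂_r φ(r) for all r ∈ [r₁,r₂]. Then there is a constant C′ depending only on C such that for every smooth f : [r₁,r₂] → ℂ one has ∫_{r₁}^{r₂} |f(r)/r|² (r ∂_r φ(r)) r dr ≤ C′ ( ∫_{r₁}^{r₂} |∂_r f(r)|² φ(r) r dr + φ(r₂)|f(r₂)|² ). -/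
open MeasureTheory intervalIntegral

/-- Weighted Hardy inequality for `∂_r` on an annulus with increasing weight. -/
theorem weighted_hardy_increasing (C : ℝ) (hC : 0 < C) :
    ∃ C' > 0, ∀ (r₁ r₂ : ℝ) (φ φ' : ℝ → ℝ) (f : ℝ → ℂ),
      0 < r₁ → r₁ < r₂ →
      (∀ r ∈ Set.Icc r₁ r₂, HasDerivAt φ (φ' r) r) →
      ContinuousOn φ' (Set.Icc r₁ r₂) →
      (∀ r ∈ Set.Icc r₁ r₂, 0 < φ r) →
      (∀ r ∈ Set.Icc r₁ r₂, 0 < φ' r) →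
      (∀ r ∈ Set.Icc r₁ r₂, φ r ≤ C * (r * φ' r)) →
      ContDiff ℝ (⊤ : ℕ∞) f →
      ∫ r in r₁..r₂, ‖f r / (r : ℂ)‖ ^ 2 * (r * φ' r) * r ≤
        C' * ((∫ r in r₁..r₂, ‖deriv f r‖ ^ 2 * φ r * r) + φ r₂ * ‖f r₂‖ ^ 2) := by
  refine ⟨4 * C + 2, by linarith, ?_⟩
  intro r₁ r₂ φ φ' f hr₁ hr₁₂ hφd hφ'c hφpos hφ'pos hdom hf
  have hle : r₁ ≤ r₂ := hr₁₂.le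
  have huIcc : Set.uIcc r₁ r₂ = Set.Icc r₁ r₂ := Set.uIcc_of_le hle
  have hr₂mem : r₂ ∈ Set.Icc r₁ r₂ := Set.right_mem_Icc.2 hle
  have hr₁mem : r₁ ∈ Set.Icc r₁ r₂ := Set.left_mem_Icc.2 hle
  -- continuity facts
  have hfc : Continuous f := hf.continuous
  have hf'c : Continuous (deriv f) := hf.continuous_deriv (by simp)
  have hφc : ContinuousOn φ (Set.Icc r₁ r₂) := fun x hx =>
    (hφd x hx).continuousAt.continuousWithinAt
  set g : ℝ → ℝ := fun r => ‖f r‖ ^ 2 with hgdef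
  set g' : ℝ → ℝ := fun r => 2 * (@inner ℝ ℂ _ (f r) (deriv f r)) with hg'def
  have hgd : ∀ x : ℝ, HasDerivAt g (g' x) x := by
    intro x
    have hfx : HasDerivAt f (deriv f x) x := (hf.differentiable (by simp) x).hasDerivAt
    have h := hfx.inner ℝ hfx
    convert h using 1 <;> try rfl
    · ext t; exact (real_inner_self_eq_norm_sq _).symm
    · rw [real_inner_comm (f x)]; ring
  have hgc : Continuous g := (hfc.norm.pow 2)
  have hg'c : Continuous g' := continuous_const.mul (hfc.inner hf'c)
  -- main quantities
  set A : ℝ := ∫ r in r₁..r₂, ‖deriv f r‖ ^ 2 * φ r * r with hA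
  set B : ℝ := φ r₂ * ‖f r₂‖ ^ 2 with hB
  set L : ℝ := ∫ r in r₁..r₂, g r * φ' r with hL
  -- the LHS equals L
  have hLHS : ∫ r in r₁..r₂, ‖f r / (r : ℂ)‖ ^ 2 * (r * φ' r) * r = L := by
    apply intervalIntegral.integral_congr
    intro r hr
    rw [huIcc] at hr
    have hr0 : (0:ℝ) < r := lt_of_lt_of_le hr₁ hr.1
    have hnr : ‖(r : ℂ)‖ = r := by
      rw [Complex.norm_real, Real.norm_eq_abs, abs_of_pos hr0]
    have e1 : ‖f r / (r : ℂ)‖ = ‖f r‖ / r := by rw [norm_div, hnr]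
    show ‖f r / (r : ℂ)‖ ^ 2 * (r * φ' r) * r = g r * φ' r
    rw [e1]
    simp only [hgdef]
    field_simp
  -- integrability
  have hφ'int : IntervalIntegrable φ' volume r₁ r₂ := by
    apply ContinuousOn.intervalIntegrable; rwa [huIcc]
  have hgφ'int : IntervalIntegrable (fun r => g r * φ' r) volume r₁ r₂ := by
    apply ContinuousOn.intervalIntegrable
    rw [huIcc]; exact (hgc.continuousOn.mul hφ'c)
  have hAint : IntervalIntegrable (fun r => ‖deriv f r‖ ^ 2 * φ r * r) volume r₁ r₂ := by
    apply ContinuousOn.intervalIntegrable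
    rw [huIcc]
    exact (((hf'c.norm.pow 2).continuousOn.mul hφc).mul continuousOn_id)
  have hg'φint : IntervalIntegrable (fun r => g' r * φ r) volume r₁ r₂ := by
    apply ContinuousOn.intervalIntegrable
    rw [huIcc]; exact hg'c.continuousOn.mul hφc
  -- integration by parts
  have hparts : L = g r₂ * φ r₂ - g r₁ * φ r₁ - ∫ r in r₁..r₂, g' r * φ r := by
    rw [hL]
    apply intervalIntegral.integral_mul_deriv_eq_deriv_mul_of_hasDerivAt
    · exact hgc.continuousOn
    · rwa [huIcc]
    · intro x hx
      exact hgd x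
    · intro x hx
      rw [min_eq_left hle, max_eq_right hle] at hx
      exact hφd x (Set.mem_Icc.2 ⟨hx.1.le, hx.2.le⟩)
    · exact hg'c.intervalIntegrable r₁ r₂
    · exact hφ'int
  -- pointwise bound : -(g φ'/2 + 2C ‖f'‖² φ r) ≤ g' φ on Icc
  have hpt : ∀ r ∈ Set.Icc r₁ r₂,
      -((1/2) * (g r * φ' r) + 2 * C * (‖deriv f r‖ ^ 2 * φ r * r)) ≤ g' r * φ r := by
    intro r hr
    have hr0 : (0:ℝ) < r := lt_of_lt_of_le hr₁ hr.1
    have hp := hφpos r hr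
    have hp' := hφ'pos r hr
    have hd := hdom r hr
    have hip : -(‖f r‖ * ‖deriv f r‖) ≤ @inner ℝ ℂ _ (f r) (deriv f r) :=
      neg_le_of_abs_le (abs_real_inner_le_norm _ _)
    set a := ‖f r‖
    set b := ‖deriv f r‖
    have ha : 0 ≤ a := norm_nonneg _
    have hb : 0 ≤ b := norm_nonneg _
    have key : 0 ≤ (g' r * φ r + ((1/2) * (g r * φ' r) + 2 * C * (b ^ 2 * φ r * r))) * φ' r := by
      have h1 : φ r ≤ C * (r * φ' r) := hd
      have h2 : b ^ 2 * φ r * (C * (r * φ' r) - φ r) ≥ 0 := by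
        apply mul_nonneg (mul_nonneg (sq_nonneg _) hp.le) (by linarith)
      have h3 : (@inner ℝ ℂ _ (f r) (deriv f r) + a * b) * (φ r * φ' r) ≥ 0 :=
        mul_nonneg (by linarith) (mul_nonneg hp.le hp'.le)
      simp only [hgdef, hg'def]
      nlinarith [sq_nonneg (a * φ' r - 2 * b * φ r), sq_nonneg (a * φ' r + 2 * b * φ r)]
    nlinarith [mul_pos hp' hp']
  -- integral bound
  have hmono : -((1/2) * L + 2 * C * A) ≤ ∫ r in r₁..r₂, g' r * φ r := by
    have heq : -((1/2) * L + 2 * C * A)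
        = ∫ r in r₁..r₂, -((1/2) * (g r * φ' r) + 2 * C * (‖deriv f r‖ ^ 2 * φ r * r)) := by
      rw [hL, hA, intervalIntegral.integral_neg, intervalIntegral.integral_add
        ((hgφ'int.const_mul _)) ((hAint.const_mul _)),
        intervalIntegral.integral_const_mul, intervalIntegral.integral_const_mul]
    rw [heq]
    apply intervalIntegral.integral_mono_on hle _ hg'φint
    · intro r hr; exact hpt r hr
    · exact (((hgφ'int.const_mul _)).add ((hAint.const_mul _))).neg
  -- nonnegativity
  have hA0 : 0 ≤ A := by
    rw [hA]
    apply intervalIntegral.integral_nonneg hle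
    intro r hr
    have hr0 : (0:ℝ) < r := lt_of_lt_of_le hr₁ hr.1
    exact mul_nonneg (mul_nonneg (sq_nonneg _) (hφpos r hr).le) hr0.le
  have hB0 : 0 ≤ B := mul_nonneg (hφpos r₂ hr₂mem).le (sq_nonneg _)
  have hg1 : 0 ≤ g r₁ * φ r₁ := mul_nonneg (sq_nonneg _) (hφpos r₁ hr₁mem).le
  have hgB : g r₂ * φ r₂ = B := by rw [hB]; ring
  -- conclude
  rw [hLHS]
  have hLb : L ≤ B + ((1/2) * L + 2 * C * A) := by
    rw [hparts, ← hgB]; linarith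
  have : L ≤ 2 * B + 4 * C * A := by linarith
  rw [hA, hB] at *
  nlinarith [hA0, hB0]
end

section
/- Let ℓ, k ∈ ℝ with ℓ > k. There is a constant C depending only on ℓ − k such that for every smooth compactly supported f : (0,∞) → ℂ (support contained in a compact subset of (0,∞)) one has ∫₀^∞ |f(r)/r^{k+1}|² r dr ≤ C ∫₀^∞ |r^{-k} (∂_r f(r) − (ℓ/r) f(r))|² r dr. -/
open MeasureTheory Set
open scoped RealInnerProductSpace

private lemma hardy_amgm {d : ℝ} (hd : 0 < d) (a b : ℝ) :
    a * b ≤ d / 2 * a ^ 2 + 1 / (2 * d) * b ^ 2 := by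
  have h1 : (0:ℝ) ≤ (d * a - b) ^ 2 / (2 * d) := by positivity
  have h2 : d / 2 * a ^ 2 + 1 / (2 * d) * b ^ 2 - a * b = (d * a - b) ^ 2 / (2 * d) := by
    field_simp; ring
  linarith

/-- Noncritical weighted Hardy inequality for `∂_r − ℓ/r` on the half-line,
with constant depending only on `ℓ − k`. -/
theorem weighted_hardy_noncritical (d : ℝ) (hd : 0 < d) :
    ∃ C > 0, ∀ (ℓ k : ℝ), ℓ - k = d → ∀ f : ℝ → ℂ,
      ContDiff ℝ (⊤ : ℕ∞) f → HasCompactSupport f → tsupport f ⊆ Set.Ioi 0 →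
      ∫ r in Set.Ioi (0:ℝ), ‖f r‖ ^ 2 / r ^ (2 * k + 2) * r ≤
        C * ∫ r in Set.Ioi (0:ℝ), ‖deriv f r - (ℓ / r) • f r‖ ^ 2 / r ^ (2 * k) * r := by
  refine ⟨1 / d ^ 2, by positivity, ?_⟩
  intro ℓ k hlk f hf hcs hts
  have hfd : Differentiable ℝ f := hf.differentiable (by simp)
  have hfc : Continuous f := hf.continuous
  have hf'c : Continuous (deriv f) := hf.continuous_deriv (by simp)
  -- support interval
  obtain ⟨a, b, ha, haleb, hab⟩ : ∃ a b : ℝ, 0 < a ∧ a ≤ b ∧ tsupport f ⊆ Icc a b := by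
    rcases (tsupport f).eq_empty_or_nonempty with h | h
    · exact ⟨1, 2, one_pos, by norm_num, by simp [h]⟩
    · obtain ⟨a, haL⟩ := (hcs : IsCompact (tsupport f)).exists_isLeast h
      obtain ⟨b, hbG⟩ := (hcs : IsCompact (tsupport f)).exists_isGreatest h
      exact ⟨a, b, hts haL.1, haL.2 hbG.1, fun x hx => ⟨haL.2 hx, hbG.2 hx⟩⟩
  have hIcc : Icc a b ⊆ Ioi 0 := fun x hx => lt_of_lt_of_le ha hx.1
  have hf0 : ∀ r, r ∉ Icc a b → f r = 0 := fun r hr =>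
    image_eq_zero_of_notMem_tsupport (fun h => hr (hab h))
  have hdf0 : ∀ r, r ∉ Icc a b → deriv f r = 0 := by
    intro r hr
    have hev : f =ᶠ[nhds r] (fun _ => (0:ℂ)) :=
      Filter.eventually_of_mem (isClosed_Icc.isOpen_compl.mem_nhds hr) (fun x hx => hf0 x hx)
    rw [hev.deriv_eq, deriv_const]
  set u : ℝ → ℂ := fun r => deriv f r - (ℓ / r) • f r with hu_def
  have hu0 : ∀ r, r ∉ Icc a b → u r = 0 := by
    intro r hr; simp [hu_def, hf0 r hr, hdf0 r hr]
  -- key functions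
  set F1 : ℝ → ℝ := fun r => ‖f r‖ ^ 2 * r ^ (-(2*k) - 1) with hF1_def
  set F2 : ℝ → ℝ := fun r => ‖u r‖ ^ 2 * r ^ (-(2*k) + 1) with hF2_def
  set P : ℝ → ℝ := fun r => ⟪deriv f r, f r⟫ * r ^ (-(2*k)) with hP_def
  set Q : ℝ → ℝ := fun r => ⟪u r, f r⟫ * r ^ (-(2*k)) with hQ_def
  have ms : MeasurableSet (Icc a b) := measurableSet_Icc
  -- continuity / integrability
  have hrpow : ∀ c : ℝ, ContinuousOn (fun r : ℝ => r ^ c) (Icc a b) :=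
    fun c => continuousOn_id.rpow_const (fun x hx => Or.inl (hIcc hx).ne')
  have huc : ContinuousOn u (Icc a b) := by
    refine hf'c.continuousOn.sub (ContinuousOn.fun_smul ?_ hfc.continuousOn)
    exact continuousOn_const.div continuousOn_id (fun x hx => (hIcc hx).ne')
  have hF1c : ContinuousOn F1 (Icc a b) :=
    ((hfc.norm.continuousOn).pow 2).mul (hrpow _)
  have hF2c : ContinuousOn F2 (Icc a b) := ((huc.norm).pow 2).mul (hrpow _)
  have hPc : ContinuousOn P (Icc a b) :=
    ((hf'c.inner hfc).continuousOn).mul (hrpow _)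
  have hQc : ContinuousOn Q (Icc a b) :=
    (huc.inner hfc.continuousOn).mul (hrpow _)
  have intF1 : IntegrableOn F1 (Icc a b) := hF1c.integrableOn_compact isCompact_Icc
  have intF2 : IntegrableOn F2 (Icc a b) := hF2c.integrableOn_compact isCompact_Icc
  have intP : IntegrableOn P (Icc a b) := hPc.integrableOn_compact isCompact_Icc
  have intQ : IntegrableOn Q (Icc a b) := hQc.integrableOn_compact isCompact_Icc
  -- rewrite the LHS integral
  have hL : (∫ r in Ioi (0:ℝ), ‖f r‖ ^ 2 / r ^ (2 * k + 2) * r) = ∫ r in Icc a b, F1 r := by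
    rw [setIntegral_eq_of_subset_of_forall_diff_eq_zero measurableSet_Ioi hIcc
      (fun r hr => by simp [hf0 r hr.2])]
    refine setIntegral_congr_fun ms (fun r hr => ?_)
    have hr0 : 0 < r := hIcc hr
    simp only [hF1_def]
    rw [show (-(2*k) - 1 : ℝ) = 1 - (2*k+2) by ring, Real.rpow_sub hr0, Real.rpow_one]
    ring
  -- rewrite the RHS integral
  have hR : (∫ r in Ioi (0:ℝ), ‖deriv f r - (ℓ / r) • f r‖ ^ 2 / r ^ (2 * k) * r)
      = ∫ r in Icc a b, F2 r := by
    rw [setIntegral_eq_of_subset_of_forall_diff_eq_zero measurableSet_Ioi hIcc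
      (fun r hr => by
        have h := hu0 r hr.2
        simp only [hu_def] at h
        rw [h]
        simp)]
    refine setIntegral_congr_fun ms (fun r hr => ?_)
    have hr0 : 0 < r := hIcc hr
    simp only [hF2_def, hu_def]
    rw [show (-(2*k) + 1 : ℝ) = 1 - (2*k) by ring, Real.rpow_sub hr0, Real.rpow_one]
    ring
  -- integration by parts via FTC
  set G : ℝ → ℝ := fun r => 2 * P r + (-(2*k)) * F1 r with hG_def
  have hG0 : ∀ r, r ∉ Icc a b → G r = 0 := by
    intro r hr
    simp [hG_def, hP_def, hF1_def, hf0 r hr, hdf0 r hr]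
  have ha' : (0:ℝ) < a / 2 := by linarith
  have hab' : a / 2 ≤ b + 1 := by linarith
  have hIcc' : Icc (a/2) (b+1) ⊆ Ioi 0 := fun x hx => lt_of_lt_of_le ha' hx.1
  have hGc : ContinuousOn G (Icc (a/2) (b+1)) := by
    have hrpow' : ∀ c : ℝ, ContinuousOn (fun r : ℝ => r ^ c) (Icc (a/2) (b+1)) :=
      fun c => continuousOn_id.rpow_const (fun x hx => Or.inl (hIcc' hx).ne')
    refine ContinuousOn.add ?_ ?_
    · exact continuousOn_const.mul (((hf'c.inner hfc).continuousOn).mul (hrpow' _))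
    · exact continuousOn_const.mul (((hfc.norm.continuousOn).pow 2).mul (hrpow' _))
  have hderivH : ∀ r ∈ uIcc (a/2) (b+1),
      HasDerivAt (fun t => ⟪f t, f t⟫ * t ^ (-(2*k))) (G r) r := by
    intro r hr
    rw [uIcc_of_le hab'] at hr
    have hr0 : 0 < r := hIcc' hr
    have h1 : HasDerivAt (fun t => ⟪f t, f t⟫)
        (⟪f r, deriv f r⟫ + ⟪deriv f r, f r⟫) r :=
      (hfd r).hasDerivAt.inner ℝ (hfd r).hasDerivAt
    have h2 : HasDerivAt (fun t : ℝ => t ^ (-(2*k)))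
        ((-(2*k)) * r ^ (-(2*k) - 1)) r :=
      Real.hasDerivAt_rpow_const (Or.inl hr0.ne')
    have h3 := h1.fun_mul h2
    refine h3.congr_deriv (Eq.symm ?_)
    simp only [hG_def, hP_def, hF1_def]
    rw [real_inner_comm (f r) (deriv f r), real_inner_self_eq_norm_sq]
    ring
  have hGint : IntervalIntegrable G volume (a/2) (b+1) := by
    rw [intervalIntegrable_iff_integrableOn_Icc_of_le hab']
    exact hGc.integrableOn_compact isCompact_Icc
  have hFTC : ∫ r in (a/2)..(b+1), G r = 0 := by
    rw [intervalIntegral.integral_eq_sub_of_hasDerivAt hderivH hGint]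
    have h1 : f (a/2) = 0 := hf0 _ (fun h => by linarith [h.1])
    have h2 : f (b+1) = 0 := hf0 _ (fun h => by linarith [h.2])
    simp [h1, h2]
  have hGzero : ∫ r in Icc a b, G r = 0 := by
    have e1 : ∫ r in (a/2)..(b+1), G r = ∫ r in Icc (a/2) (b+1), G r := by
      rw [intervalIntegral.integral_of_le hab', integral_Icc_eq_integral_Ioc]
    have e2 : ∫ r in Icc (a/2) (b+1), G r = ∫ r in Icc a b, G r :=
      setIntegral_eq_of_subset_of_forall_diff_eq_zero measurableSet_Icc
        (Icc_subset_Icc (by linarith) (by linarith)) (fun r hr => hG0 r hr.2)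
    rw [← e2, ← e1, hFTC]
  -- deduce ∫ P = k ∫ F1
  have hGsplit : ∫ r in Icc a b, G r
      = 2 * (∫ r in Icc a b, P r) + (-(2*k)) * ∫ r in Icc a b, F1 r := by
    simp only [hG_def]
    rw [integral_add (intP.const_mul 2) (intF1.const_mul (-(2*k))),
      integral_const_mul, integral_const_mul]
  have hPI : ∫ r in Icc a b, P r = k * ∫ r in Icc a b, F1 r := by
    rw [hGsplit] at hGzero; linarith
  -- ∫ Q = (k - ℓ) ∫ F1
  have hQsplit : ∫ r in Icc a b, Q r
      = (∫ r in Icc a b, P r) - ℓ * ∫ r in Icc a b, F1 r := by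
    have : ∫ r in Icc a b, Q r = ∫ r in Icc a b, (P r - ℓ * F1 r) := by
      refine setIntegral_congr_fun ms (fun r hr => ?_)
      have hr0 : 0 < r := hIcc hr
      simp only [hQ_def, hP_def, hF1_def, hu_def]
      rw [inner_sub_left, real_inner_smul_left, real_inner_self_eq_norm_sq,
        show (-(2*k) - 1 : ℝ) = -(2*k) - 1 from rfl, Real.rpow_sub_one hr0.ne']
      field_simp
    rw [this, integral_sub intP (intF1.const_mul ℓ), integral_const_mul]
  have hQI : ∫ r in Icc a b, Q r = -d * ∫ r in Icc a b, F1 r := by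
    rw [hQsplit, hPI, ← hlk]; ring
  -- pointwise bound: -Q r ≤ d/2 * F1 r + 1/(2d) * F2 r on Icc a b
  have hpoint : ∀ r ∈ Icc a b, -Q r ≤ d/2 * F1 r + 1/(2*d) * F2 r := by
    intro r hr
    have hr0 : 0 < r := hIcc hr
    have h1 : -(⟪u r, f r⟫) ≤ ‖u r‖ * ‖f r‖ := by
      have := abs_real_inner_le_norm (u r) (f r)
      have h2 := neg_le_abs (⟪u r, f r⟫)
      linarith
    have h3 : (0:ℝ) ≤ r ^ (-(2*k)) := (Real.rpow_pos_of_pos hr0 _).le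
    have h4 : -Q r ≤ (‖u r‖ * ‖f r‖) * r ^ (-(2*k)) := by
      simp only [hQ_def]
      rw [neg_mul_eq_neg_mul]
      exact mul_le_mul_of_nonneg_right h1 h3
    set A : ℝ := ‖f r‖ * r ^ ((-(2*k) - 1)/2) with hA_def
    set B : ℝ := ‖u r‖ * r ^ ((-(2*k) + 1)/2) with hB_def
    have hAB : (‖u r‖ * ‖f r‖) * r ^ (-(2*k)) = A * B := by
      rw [hA_def, hB_def,
        show (-(2*k) : ℝ) = (-(2*k) - 1)/2 + (-(2*k) + 1)/2 by ring, Real.rpow_add hr0]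
      ring
    have hA2 : A ^ 2 = F1 r := by
      rw [hA_def, hF1_def]
      rw [mul_pow, ← Real.rpow_natCast (r ^ ((-(2*k) - 1)/2)) 2, ← Real.rpow_mul hr0.le]
      norm_num
    have hB2 : B ^ 2 = F2 r := by
      rw [hB_def, hF2_def]
      rw [mul_pow, ← Real.rpow_natCast (r ^ ((-(2*k) + 1)/2)) 2, ← Real.rpow_mul hr0.le]
      norm_num
    calc -Q r ≤ (‖u r‖ * ‖f r‖) * r ^ (-(2*k)) := h4
      _ = A * B := hAB
      _ ≤ d/2 * A ^ 2 + 1/(2*d) * B ^ 2 := hardy_amgm hd A B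
      _ = d/2 * F1 r + 1/(2*d) * F2 r := by rw [hA2, hB2]
  -- integrate the pointwise bound
  have hmono : ∫ r in Icc a b, (-Q r) ≤ ∫ r in Icc a b, (d/2 * F1 r + 1/(2*d) * F2 r) :=
    setIntegral_mono_on intQ.neg
      ((intF1.const_mul _).add (intF2.const_mul _)) ms hpoint
  rw [integral_neg, hQI,
    integral_add (intF1.const_mul _) (intF2.const_mul _),
    integral_const_mul, integral_const_mul] at hmono
  -- finish
  rw [hL, hR]
  set I1 := ∫ r in Icc a b, F1 r
  set I2 := ∫ r in Icc a b, F2 r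
  rw [div_mul_eq_mul_div, one_mul, le_div_iff₀ (by positivity)]
  have h8 : d/2 * I1 ≤ 1/(2*d) * I2 := by linarith
  have h9 : (2*d) * (d/2 * I1) ≤ (2*d) * (1/(2*d) * I2) :=
    mul_le_mul_of_nonneg_left h8 (by linarith)
  have h10 : (2*d) * (1/(2*d) * I2) = I2 := by field_simp
  nlinarith [h9, h10]
end

section
/- Let m ≥ 1 be an integer, Q(r) = √8 (m+1) r^m / (1 + r^{2(m+1)}), A_θ[Q](r) = −(1/2)∫₀^r Q² r′dr′, and define the operator A_Q f := ∂_r f − ((m+1+A_θ[Q](r))/r) f. Then A_Q(rQ) = 0 on (0,∞), i.e. r ↦ r·Q(r) lies in the kernel of A_Q. -/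
open MeasureTheory intervalIntegral

/-- `rQ` lies in the kernel of the supersymmetric operator `A_Q`. -/
theorem kernel_AQ_rQ (m : ℕ) (hm : 1 ≤ m) (Q Aθ : ℝ → ℝ)
    (hQ : ∀ r : ℝ, Q r = Real.sqrt 8 * ((m : ℝ) + 1) * r ^ m / (1 + r ^ (2 * (m + 1))))
    (hA : ∀ r : ℝ, Aθ r = -(1/2) * ∫ t in (0:ℝ)..r, Q t ^ 2 * t) :
    ∀ r : ℝ, 0 < r →
      deriv (fun s => s * Q s) r - (((m : ℝ) + 1 + Aθ r) / r) * (r * Q r) = 0 := by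
  intro r hr
  have h8 : Real.sqrt 8 ^ 2 = 8 := Real.sq_sqrt (by norm_num)
  have hpos : ∀ t : ℝ, (0:ℝ) < 1 + t ^ (2*(m+1)) := by
    intro t
    have h : (0:ℝ) ≤ t ^ (2*(m+1)) := by rw [pow_mul]; positivity
    linarith
  have he1 : 2*(m+1) - 1 = 2*m+1 := by omega
  have he2 : 2*(m+1) = 2*m+2 := by omega
  -- antiderivative of Q²t
  have hF : ∀ t : ℝ, HasDerivAt (fun t : ℝ => -4*((m:ℝ)+1)/(1+t^(2*(m+1)))) (Q t ^ 2 * t) t := by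
    intro t
    have h1 : HasDerivAt (fun t : ℝ => 1 + t^(2*(m+1))) (((2*(m+1):ℕ):ℝ) * t^(2*(m+1)-1)) t := by
      simpa using (hasDerivAt_pow (2*(m+1)) t).const_add 1
    have h2 : HasDerivAt (fun t : ℝ => -4*((m:ℝ)+1)/(1+t^(2*(m+1)))) _ t :=
      (hasDerivAt_const t (-4*((m:ℝ)+1))).div h1 (hpos t).ne'
    convert h2 using 1
    rw [hQ t, he1, he2]
    push_cast
    field_simp
    ring_nf
    rw [h8]
    ring
  have hQc : Continuous Q := by
    have : Q = fun t => Real.sqrt 8 * ((m : ℝ) + 1) * t ^ m / (1 + t ^ (2 * (m + 1))) :=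
      funext hQ
    rw [this]
    exact (continuous_const.mul (continuous_pow m)).div
      (continuous_const.add (continuous_pow _)) (fun t => (hpos t).ne')
  have hInt : (∫ t in (0:ℝ)..r, Q t ^ 2 * t)
      = -4*((m:ℝ)+1)/(1+r^(2*(m+1))) + 4*((m:ℝ)+1) := by
    have := intervalIntegral.integral_eq_sub_of_hasDerivAt (a := 0) (b := r)
      (fun t _ => hF t) (((hQc.pow 2).mul continuous_id).intervalIntegrable 0 r)
    rw [this]
    have h0 : (0:ℝ)^(2*(m+1)) = 0 := by simp
    rw [h0]
    ring
  -- derivative of s ↦ s * Q s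
  have hfun : (fun s => s * Q s)
      = fun s => Real.sqrt 8 * ((m : ℝ) + 1) * s ^ (m+1) / (1 + s ^ (2 * (m + 1))) := by
    funext s
    rw [hQ s]
    ring
  have hN : HasDerivAt (fun s : ℝ => Real.sqrt 8 * ((m : ℝ) + 1) * s ^ (m+1))
      (Real.sqrt 8 * ((m : ℝ) + 1) * (((m+1:ℕ):ℝ) * r^m)) r := by
    simpa using ((hasDerivAt_pow (m+1) r).const_mul (Real.sqrt 8 * ((m : ℝ) + 1)))
  have hD : HasDerivAt (fun s : ℝ => 1 + s^(2*(m+1))) (((2*(m+1):ℕ):ℝ) * r^(2*(m+1)-1)) r := by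
    simpa using (hasDerivAt_pow (2*(m+1)) r).const_add 1
  have hder : deriv (fun s => s * Q s) r
      = (Real.sqrt 8 * ((m : ℝ) + 1) * (((m+1:ℕ):ℝ) * r^m) * (1+r^(2*(m+1)))
        - Real.sqrt 8 * ((m : ℝ) + 1) * r^(m+1) * (((2*(m+1):ℕ):ℝ) * r^(2*(m+1)-1)))
        / (1+r^(2*(m+1)))^2 := by
    rw [hfun]
    exact (hN.div hD (hpos r).ne').deriv
  rw [hder, hA r, hInt, hQ r, he1, he2]
  push_cast
  have hd := (hpos r).ne'
  rw [he2] at hd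
  field_simp
  ring_nf
end

section
/- Let m ≥ 1 be an integer, Q(r) = √8 (m+1) r^m / (1 + r^{2(m+1)}), A_θ[Q](r) = −(1/2)∫₀^r Q² r′dr′, for complex v let B_Q v(r) := (1/r)∫₀^r Re(\overline{Q} v)(r′) r′ dr′, and L_Q v := ∂_r v − ((m+A_θ[Q])/r) v + Q·B_Q v. Then with ΛQ := Q + r∂_rQ one has: (i) B_Q(ΛQ)(r) = r Q(r)²/2 for all r > 0, and (ii) L_Q(ΛQ) = 0 on (0,∞). -/
open MeasureTheory intervalIntegral

noncomputable def KLQc (k : ℕ) : ℝ := Real.sqrt 8 * ((k : ℝ) + 2)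

noncomputable def KLQD (k : ℕ) (r : ℝ) : ℝ := 1 + r ^ (2*k+4)

lemma KLQD_pos (k : ℕ) (r : ℝ) : 0 < KLQD k r := by
  have h : 2*k+4 = (k+2)*2 := by omega
  have : 0 ≤ r ^ (2*k+4) := by rw [h, pow_mul]; positivity
  unfold KLQD; linarith

noncomputable def KLQQ (k : ℕ) (r : ℝ) : ℝ := KLQc k * r ^ (k+1) / KLQD k r

noncomputable def KLQQd (k : ℕ) (r : ℝ) : ℝ :=
  (KLQc k * (((k:ℝ)+1) * r ^ k) * KLQD k r
    - KLQc k * r ^ (k+1) * ((2*(k:ℝ)+4) * r ^ (2*k+3))) / (KLQD k r) ^ 2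

lemma KLQ_hasDerivAt_D (k : ℕ) (r : ℝ) :
    HasDerivAt (KLQD k) ((2*(k:ℝ)+4) * r ^ (2*k+3)) r := by
  have h := (hasDerivAt_pow (2*k+4) r).const_add 1
  have he : 2*k+4-1 = 2*k+3 := rfl
  rw [he] at h
  refine h.congr_deriv ?_
  push_cast; ring

lemma KLQ_hasDerivAt_Q (k : ℕ) (r : ℝ) : HasDerivAt (KLQQ k) (KLQQd k r) r := by
  have h1 : HasDerivAt (fun r : ℝ => KLQc k * r ^ (k+1)) (KLQc k * (((k:ℝ)+1) * r ^ k)) r := by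
    have := (hasDerivAt_pow (k+1) r).const_mul (KLQc k)
    simpa using this
  exact h1.div (KLQ_hasDerivAt_D k r) (KLQD_pos k r).ne'

lemma KLQ_deriv_Q (k : ℕ) : deriv (KLQQ k) = KLQQd k :=
  funext fun r => (KLQ_hasDerivAt_Q k r).deriv

lemma KLQ_cont_Q (k : ℕ) : Continuous (KLQQ k) := by
  apply Continuous.div (by fun_prop) (by unfold KLQD; fun_prop)
  exact fun r => (KLQD_pos k r).ne'

lemma KLQ_cont_Qd (k : ℕ) : Continuous (KLQQd k) := by
  apply Continuous.div (by unfold KLQD; fun_prop) (by unfold KLQD; fun_prop)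
  exact fun r => pow_ne_zero 2 (KLQD_pos k r).ne'

noncomputable def KLQG (k : ℕ) (r : ℝ) : ℝ :=
  KLQc k * ((k:ℝ)+2) * (r ^ (k+1) - r ^ (3*k+5)) / (KLQD k r) ^ 2

noncomputable def KLQGd (k : ℕ) (r : ℝ) : ℝ :=
  (KLQc k * ((k:ℝ)+2) * (((k:ℝ)+1) * r ^ k - (3*(k:ℝ)+5) * r ^ (3*k+4)) * (KLQD k r) ^ 2
    - KLQc k * ((k:ℝ)+2) * (r ^ (k+1) - r ^ (3*k+5))
      * (2 * KLQD k r * ((2*(k:ℝ)+4) * r ^ (2*k+3)))) / ((KLQD k r) ^ 2) ^ 2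

lemma KLQ_hasDerivAt_G (k : ℕ) (r : ℝ) : HasDerivAt (KLQG k) (KLQGd k r) r := by
  have h1 : HasDerivAt (fun r : ℝ => KLQc k * ((k:ℝ)+2) * (r ^ (k+1) - r ^ (3*k+5)))
      (KLQc k * ((k:ℝ)+2) * (((k:ℝ)+1) * r ^ k - (3*(k:ℝ)+5) * r ^ (3*k+4))) r := by
    have ha := hasDerivAt_pow (k+1) r
    have hb := hasDerivAt_pow (3*k+5) r
    have he1 : k+1-1 = k := rfl
    have he2 : 3*k+5-1 = 3*k+4 := rfl
    rw [he1] at ha; rw [he2] at hb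
    have := (ha.sub hb).const_mul (KLQc k * ((k:ℝ)+2))
    refine this.congr_deriv ?_
    push_cast; ring
  have h2 : HasDerivAt (fun r => (KLQD k r) ^ 2)
      (2 * KLQD k r * ((2*(k:ℝ)+4) * r ^ (2*k+3))) r := by
    have := (KLQ_hasDerivAt_D k r).pow 2
    refine this.congr_deriv ?_
    ring
  exact h1.div h2 (pow_ne_zero 2 (KLQD_pos k r).ne')

lemma KLQ_c_sq (k : ℕ) : KLQc k ^ 2 = 8 * ((k:ℝ)+2) ^ 2 := by
  unfold KLQc
  rw [mul_pow, Real.sq_sqrt (by norm_num : (0:ℝ) ≤ 8)]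

/-- `B_Q(ΛQ) = rQ²/2` and `L_Q(ΛQ) = 0`: the scaling mode `ΛQ` lies in the kernel
of the linearized Bogomol'nyi operator `L_Q`. -/
theorem kernel_LQ_LambdaQ (m : ℕ) (hm : 1 ≤ m) (Q Aθ : ℝ → ℝ)
    (hQ : ∀ r : ℝ, Q r = Real.sqrt 8 * ((m : ℝ) + 1) * r ^ m / (1 + r ^ (2 * (m + 1))))
    (hA : ∀ r : ℝ, Aθ r = -(1/2) * ∫ t in (0:ℝ)..r, Q t ^ 2 * t) :
    ∀ r : ℝ, 0 < r →
      (1/r) * (∫ t in (0:ℝ)..r, Q t * (Q t + t * deriv Q t) * t) = r * Q r ^ 2 / 2 ∧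
      deriv (fun s => Q s + s * deriv Q s) r
        - (((m : ℝ) + Aθ r) / r) * (Q r + r * deriv Q r)
        + Q r * ((1/r) * ∫ t in (0:ℝ)..r, Q t * (Q t + t * deriv Q t) * t) = 0 := by
  obtain ⟨k, rfl⟩ : ∃ k, m = k + 1 := ⟨m - 1, (Nat.succ_pred_eq_of_pos hm).symm⟩
  have hQfun : Q = KLQQ k := by
    funext r
    rw [hQ r]
    unfold KLQQ KLQc KLQD
    have he : 2 * (k + 1 + 1) = 2*k+4 := by omega
    rw [he]
    push_cast; ring
  subst hQfun
  clear hQ hm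
  -- the integral in part (i)
  have hint : ∀ r : ℝ,
      (∫ t in (0:ℝ)..r, KLQQ k t * (KLQQ k t + t * deriv (KLQQ k) t) * t)
        = r ^ 2 * KLQQ k r ^ 2 / 2 := by
    intro r
    have hder : ∀ x ∈ Set.uIcc (0:ℝ) r,
        HasDerivAt (fun t => t ^ 2 * KLQQ k t ^ 2 / 2)
          (KLQQ k x * (KLQQ k x + x * deriv (KLQQ k) x) * x) x := by
      intro x _
      have := ((hasDerivAt_pow 2 x).mul ((KLQ_hasDerivAt_Q k x).pow 2)).div_const 2
      refine this.congr_deriv ?_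
      rw [KLQ_deriv_Q, Pi.pow_apply]
      push_cast; ring
    have hcont : Continuous (fun t => KLQQ k t * (KLQQ k t + t * deriv (KLQQ k) t) * t) := by
      rw [KLQ_deriv_Q]
      have := KLQ_cont_Q k
      have := KLQ_cont_Qd k
      fun_prop
    have := intervalIntegral.integral_eq_sub_of_hasDerivAt hder
      (hcont.intervalIntegrable 0 r)
    simpa using this
  intro r hr
  have hB : (1/r) * (∫ t in (0:ℝ)..r, KLQQ k t * (KLQQ k t + t * deriv (KLQQ k) t) * t)
      = r * KLQQ k r ^ 2 / 2 := by
    rw [hint r]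
    field_simp
  refine ⟨hB, ?_⟩
  rw [hB]
  -- value of Aθ
  have hAval : Aθ r = -2 * ((k:ℝ)+2) * r ^ (2*k+4) / KLQD k r := by
    rw [hA r]
    have hder : ∀ x ∈ Set.uIcc (0:ℝ) r,
        HasDerivAt (fun t => -(4*((k:ℝ)+2)) / KLQD k t) (KLQQ k x ^ 2 * x) x := by
      intro x _
      have h1 : HasDerivAt (fun t => -(4*((k:ℝ)+2)) / KLQD k t)
          ((0 * KLQD k x - (-(4*((k:ℝ)+2))) * ((2*(k:ℝ)+4) * x ^ (2*k+3))) / (KLQD k x) ^ 2) x :=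
        (hasDerivAt_const x (-(4*((k:ℝ)+2)))).div (KLQ_hasDerivAt_D k x) (KLQD_pos k x).ne'
      convert h1 using 1
      have hx2 : KLQQ k x ^ 2 = 8 * ((k:ℝ)+2) ^ 2 * x ^ (2*k+2) / (KLQD k x) ^ 2 := by
        unfold KLQQ
        rw [div_pow, ← KLQ_c_sq k]
        congr 1
        ring
      rw [hx2]
      field_simp
      ring
    have hcont : Continuous (fun t => KLQQ k t ^ 2 * t) := by
      have := KLQ_cont_Q k; fun_prop
    have hFTC := intervalIntegral.integral_eq_sub_of_hasDerivAt hder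
      (hcont.intervalIntegrable 0 r)
    rw [hFTC]
    have hD0 : KLQD k 0 = 1 := by
      unfold KLQD; rw [zero_pow (by omega)]; norm_num
    rw [hD0]
    field_simp [(KLQD_pos k r).ne']
    unfold KLQD
    ring
  rw [hAval, KLQ_deriv_Q]
  -- replace ΛQ by its closed form G
  have hG : (fun s => KLQQ k s + s * KLQQd k s) = KLQG k := by
    funext s
    unfold KLQQ KLQQd KLQG
    have hD := (KLQD_pos k s).ne'
    field_simp
    unfold KLQD
    ring
  rw [hG, (KLQ_hasDerivAt_G k r).deriv]
  have hQ2 : KLQQ k r ^ 2 = 8 * ((k:ℝ)+2) ^ 2 * r ^ (2*k+2) / (KLQD k r) ^ 2 := by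
    unfold KLQQ
    rw [div_pow, ← KLQ_c_sq k]
    congr 1
    ring
  rw [hQ2]
  unfold KLQGd KLQQ KLQQd
  have hD := (KLQD_pos k r).ne'
  field_simp
  unfold KLQD
  push_cast
  ring
end

section
/- Let m ≥ 1 be an integer, Q(r) = √8 (m+1) r^m / (1 + r^{2(m+1)}), and A_θ[Q](r) = −(1/2)∫₀^r Q² r′dr′. Define the formal adjoint L_Q* w := −∂_r w − (1/r) w − ((m+A_θ[Q])/r) w + Q(r) ∫_r^∞ Q(s) Re(w(s)) ds (adjoint of L_Q with respect to the real inner product (f,g)_r = 2π∫₀^∞ Re(\overline{f} g) r dr). Then L_Q*(rQ) = 2(m+1) Q on (0,∞). -/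
open MeasureTheory intervalIntegral

private lemma denom_pos (n : ℕ) (hn : Even n) (t : ℝ) : (0:ℝ) < 1 + t ^ n := by
  have : (0:ℝ) ≤ t ^ n := hn.pow_nonneg t
  linarith

private lemma hasDerivAt_frac (n : ℕ) (t : ℝ) (h : (1:ℝ) + t ^ n ≠ 0) :
    HasDerivAt (fun t : ℝ => t ^ n / (1 + t ^ n))
      ((n * t ^ (n - 1)) / (1 + t ^ n) ^ 2) t := by
  have h1 := hasDerivAt_pow n t
  have h2 : HasDerivAt (fun t : ℝ => 1 + t ^ n) ((n : ℝ) * t ^ (n - 1)) t := by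
    simpa using (hasDerivAt_pow n t).const_add 1
  have h3 := h1.div h2 h
  refine h3.congr_deriv ?_
  congr 1
  ring

/-- The adjoint identity `L_Q*(rQ) = 2(m+1)Q`. -/
theorem adjoint_LQ_rQ (m : ℕ) (hm : 1 ≤ m) (Q Aθ : ℝ → ℝ)
    (hQ : ∀ r : ℝ, Q r = Real.sqrt 8 * ((m : ℝ) + 1) * r ^ m / (1 + r ^ (2 * (m + 1))))
    (hA : ∀ r : ℝ, Aθ r = -(1/2) * ∫ t in (0:ℝ)..r, Q t ^ 2 * t) :
    ∀ r : ℝ, 0 < r →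
      -deriv (fun s => s * Q s) r - (r * Q r) / r - (((m : ℝ) + Aθ r) / r) * (r * Q r)
        + Q r * (∫ s in Set.Ioi r, Q s * (s * Q s)) = 2 * ((m : ℝ) + 1) * Q r := by
  set n : ℕ := 2 * (m + 1) with hn
  have hne : Even n := even_two_mul (m + 1)
  have hpos : ∀ t : ℝ, (0:ℝ) < 1 + t ^ n := denom_pos n hne
  have hne0 : ∀ t : ℝ, (1:ℝ) + t ^ n ≠ 0 := fun t => (hpos t).ne'
  have hc : Real.sqrt 8 * Real.sqrt 8 = 8 := Real.mul_self_sqrt (by norm_num)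
  set c : ℝ := Real.sqrt 8 with hcdef
  have hn1 : n - 1 = 2 * m + 1 := by omega
  have hn2 : n = 2 * m + 2 := by omega
  -- the integrand `Q t ^ 2 * t` is the derivative of `F t = 4(m+1) * (t^n / (1+t^n))`
  have hF : ∀ t : ℝ, HasDerivAt (fun t : ℝ => 4 * ((m : ℝ) + 1) * (t ^ n / (1 + t ^ n)))
      (Q t ^ 2 * t) t := by
    intro t
    have h := (hasDerivAt_frac n t (hne0 t)).const_mul (4 * ((m : ℝ) + 1))
    refine h.congr_deriv ?_
    symm
    have hd := hne0 t
    rw [hQ t, hn1, hn2] at *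
    push_cast
    field_simp
    linear_combination (t ^ (2 * m + 1)) * hc
  have hQcont : Continuous Q := by
    have : Q = fun t : ℝ => c * ((m : ℝ) + 1) * t ^ m / (1 + t ^ n) := funext fun t => hQ t
    rw [this]
    exact (continuous_const.mul (continuous_pow m)).div
      (continuous_const.add (continuous_pow n)) hne0
  -- value of the inner integral
  have hint1 : ∀ r : ℝ, (∫ t in (0:ℝ)..r, Q t ^ 2 * t)
      = 4 * ((m : ℝ) + 1) * (r ^ n / (1 + r ^ n)) := by
    intro r
    have := integral_eq_sub_of_hasDerivAt
      (f := fun t : ℝ => 4 * ((m : ℝ) + 1) * (t ^ n / (1 + t ^ n)))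
      (f' := fun t => Q t ^ 2 * t) (a := 0) (b := r)
      (fun t _ => hF t) (((hQcont.pow 2).mul continuous_id).intervalIntegrable 0 r)
    rw [this]
    have hnz : n ≠ 0 := by omega
    simp [zero_pow hnz]
  intro r hr
  -- value of the improper integral
  have hint2 : (∫ s in Set.Ioi r, Q s * (s * Q s))
      = 4 * ((m : ℝ) + 1) - 4 * ((m : ℝ) + 1) * (r ^ n / (1 + r ^ n)) := by
    have hEq : ∀ s : ℝ, Q s ^ 2 * s = Q s * (s * Q s) := fun s => by ring
    have htend : Filter.Tendsto (fun s : ℝ => 4 * ((m : ℝ) + 1) * (s ^ n / (1 + s ^ n)))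
        Filter.atTop (nhds (4 * ((m : ℝ) + 1))) := by
      have h1 : Filter.Tendsto (fun s : ℝ => 1 + s ^ n) Filter.atTop Filter.atTop :=
        Filter.tendsto_atTop_add_const_left _ _ (Filter.tendsto_pow_atTop (by omega))
      have h2 : Filter.Tendsto (fun s : ℝ => (1 + s ^ n)⁻¹) Filter.atTop (nhds 0) :=
        h1.inv_tendsto_atTop
      have h3 : Filter.Tendsto (fun s : ℝ => 4 * ((m : ℝ) + 1) * (1 - (1 + s ^ n)⁻¹))
          Filter.atTop (nhds (4 * ((m : ℝ) + 1) * (1 - 0))) :=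
        (Filter.Tendsto.const_sub 1 h2).const_mul _
      have h4 : (fun s : ℝ => 4 * ((m : ℝ) + 1) * (1 - (1 + s ^ n)⁻¹))
          = fun s : ℝ => 4 * ((m : ℝ) + 1) * (s ^ n / (1 + s ^ n)) := by
        funext s
        have := hne0 s
        field_simp
        ring
      rw [h4] at h3
      simpa using h3
    have hgc : ContinuousWithinAt
        (fun s : ℝ => 4 * ((m : ℝ) + 1) * (s ^ n / (1 + s ^ n))) (Set.Ici r) r :=
      ((continuous_const.mul ((continuous_pow n).div
        (continuous_const.add (continuous_pow n)) hne0)).continuousAt).continuousWithinAt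
    have := integral_Ioi_of_hasDerivAt_of_nonneg
      (g := fun s : ℝ => 4 * ((m : ℝ) + 1) * (s ^ n / (1 + s ^ n)))
      (g' := fun s => Q s * (s * Q s)) (a := r) (l := 4 * ((m : ℝ) + 1))
      hgc
      (fun s _ => by have := hF s; rw [hEq s] at this; exact this)
      (fun s hs => by
        show (0:ℝ) ≤ Q s * (s * Q s)
        have hs0 : (0:ℝ) ≤ s := le_of_lt (lt_trans hr hs)
        have h5 : Q s * (s * Q s) = s * Q s ^ 2 := by ring
        rw [h5]; positivity)
      htend
    rw [this]
  -- derivative of `s ↦ s * Q s`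
  have hfun : (fun s : ℝ => s * Q s) = fun s : ℝ => c * ((m : ℝ) + 1) * s ^ (m + 1) / (1 + s ^ n) := by
    funext s
    rw [hQ s, pow_succ]
    field_simp
  have hderiv : deriv (fun s => s * Q s) r
      = (c * ((m : ℝ) + 1) * (((m : ℝ) + 1) * r ^ m) * (1 + r ^ n)
          - c * ((m : ℝ) + 1) * r ^ (m + 1) * ((n : ℝ) * r ^ (n - 1))) / (1 + r ^ n) ^ 2 := by
    rw [hfun]
    have h1 : HasDerivAt (fun s : ℝ => c * ((m : ℝ) + 1) * s ^ (m + 1))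
        (c * ((m : ℝ) + 1) * (((m : ℝ) + 1) * r ^ m)) r := by
      have := (hasDerivAt_pow (m + 1) r).const_mul (c * ((m : ℝ) + 1))
      simpa [mul_assoc] using this
    have h2 : HasDerivAt (fun s : ℝ => 1 + s ^ n) ((n : ℝ) * r ^ (n - 1)) r := by
      simpa using (hasDerivAt_pow n r).const_add 1
    exact (h1.div h2 (hne0 r)).deriv
  -- put everything together
  have hrne : r ≠ 0 := ne_of_gt hr
  rw [hderiv, hint2, hA r, hint1 r, hQ r, hn1, hn2]
  have hden : (1:ℝ) + r ^ (2 * m + 2) ≠ 0 := by rw [← hn2]; exact hne0 r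
  push_cast
  field_simp
  ring
end

section
/- Let m ≥ 1 be an integer, Q(r) = √8 (m+1) r^m / (1 + r^{2(m+1)}), A_θ[Q](r) = −(1/2)∫₀^r Q² r′dr′, L_Q v := ∂_r v − ((m+A_θ[Q])/r) v + Q·(1/r)∫₀^r Re(\overline{Q}v) r′dr′, and L_Q* w := −∂_r w − (1/r)w − ((m+A_θ[Q])/r)w + Q∫_r^∞ Q Re(w) ds. Then: (i) L_Q(i r² Q) = 2 i r Q; (ii) L_Q*(i r Q) = −2 i ΛQ where ΛQ = Q + r∂_rQ; consequently (iii) 𝓛_Q(i r² Q) := L_Q* L_Q (i r² Q) = −4 i ΛQ. -/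
open MeasureTheory intervalIntegral

/-- Generalized null space relations: `L_Q(ir²Q) = 2irQ`, `L_Q*(irQ) = −2iΛQ`, and hence
`𝓛_Q(ir²Q) = L_Q* L_Q (ir²Q) = −4iΛQ`. -/
theorem generalized_null_space_relations (m : ℕ) (hm : 1 ≤ m) (Q Aθ : ℝ → ℝ)
    (LQ LQs : (ℝ → ℂ) → ℝ → ℂ)
    (hQ : ∀ r : ℝ, Q r = Real.sqrt 8 * ((m : ℝ) + 1) * r ^ m / (1 + r ^ (2 * (m + 1))))
    (hA : ∀ r : ℝ, Aθ r = -(1/2) * ∫ t in (0:ℝ)..r, Q t ^ 2 * t)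
    (hLQ : ∀ (v : ℝ → ℂ) (r : ℝ), 0 < r →
      LQ v r = deriv v r - ((((m : ℝ) + Aθ r) / r) • v r)
        + Complex.ofReal (Q r * ((1/r) * ∫ t in (0:ℝ)..r, Q t * (v t).re * t)))
    (hLQs : ∀ (w : ℝ → ℂ) (r : ℝ), 0 < r →
      LQs w r = -deriv w r - (r⁻¹ • w r) - ((((m : ℝ) + Aθ r) / r) • w r)
        + Complex.ofReal (Q r * ∫ s in Set.Ioi r, Q s * (w s).re)) :
    ∀ r : ℝ, 0 < r →
      LQ (fun s => Complex.I * (s : ℂ) ^ 2 * (Q s : ℂ)) r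
          = 2 * Complex.I * (r : ℂ) * (Q r : ℂ) ∧
      LQs (fun s => Complex.I * (s : ℂ) * (Q s : ℂ)) r
          = -2 * Complex.I * ((Q r : ℂ) + (r : ℂ) * Complex.ofReal (deriv Q r)) ∧
      LQs (LQ (fun s => Complex.I * (s : ℂ) ^ 2 * (Q s : ℂ))) r
          = -4 * Complex.I * ((Q r : ℂ) + (r : ℂ) * Complex.ofReal (deriv Q r)) := by
  have h8 : (Real.sqrt 8)^2 = 8 := Real.sq_sqrt (by norm_num)
  set c : ℝ := Real.sqrt 8 * ((m:ℝ)+1) with hc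
  have hc2 : c^2 = 8*((m:ℝ)+1)^2 := by rw [hc, mul_pow, h8]
  have hQ' : ∀ t:ℝ, Q t = c * t^m / (1 + t^(2*m+2)) := by
    intro t; rw [hQ t]; norm_num [hc]; ring_nf
  clear_value c
  have hden : ∀ t:ℝ, (0:ℝ) < 1 + t^(2*m+2) := by
    intro t
    nlinarith [sq_nonneg (t^(m+1)), (by ring : t^(2*m+2) = (t^(m+1))^2)]
  have hdne : ∀ t:ℝ, (1 + t^(2*m+2)) ≠ 0 := fun t => (hden t).ne'
  set dQ : ℝ → ℝ := fun t => (c*((m:ℝ)*t^(m-1)) * (1+t^(2*m+2))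
      - c*t^m * ((2*(m:ℝ)+2)*t^(2*m+1))) / (1+t^(2*m+2))^2 with hdQ
  have hQd : ∀ t:ℝ, HasDerivAt Q (dQ t) t := by
    intro t
    have h1 : HasDerivAt (fun t:ℝ => c * t^m) (c*((m:ℝ)*t^(m-1))) t :=
      (hasDerivAt_pow m t).const_mul c
    have h2 : HasDerivAt (fun t:ℝ => 1 + t^(2*m+2)) ((2*(m:ℝ)+2)*t^(2*m+1)) t := by
      simpa using (hasDerivAt_pow (2*m+2) t).const_add 1
    exact ((h1.div h2 (hdne t)).congr_of_eventuallyEq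
      (Filter.Eventually.of_forall hQ')).congr_deriv rfl
  have hderivQ : ∀ t:ℝ, deriv Q t = dQ t := fun t => (hQd t).deriv
  have hF : ∀ t:ℝ, HasDerivAt (fun t:ℝ => -(4*((m:ℝ)+1)) * (1+t^(2*m+2))⁻¹) (Q t^2 * t) t := by
    intro t
    have h2 : HasDerivAt (fun t:ℝ => 1 + t^(2*m+2)) ((2*(m:ℝ)+2)*t^(2*m+1)) t := by
      simpa using (hasDerivAt_pow (2*m+2) t).const_add 1
    have h3 := (h2.inv (hdne t)).const_mul (-(4*((m:ℝ)+1)))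
    refine h3.congr_deriv ?_
    symm
    rw [hQ' t]
    have h1 := hdne t
    field_simp
    linear_combination (t ^ (2*m+1)) * hc2
  have hQdiff : Differentiable ℝ Q := fun t => (hQd t).differentiableAt
  have hQcont : Continuous Q := hQdiff.continuous
  have hInt : ∀ s:ℝ, (∫ t in (0:ℝ)..s, Q t^2 * t)
      = -(4*((m:ℝ)+1)) * (1+s^(2*m+2))⁻¹ + 4*((m:ℝ)+1) := by
    intro s
    rw [intervalIntegral.integral_eq_sub_of_hasDerivAt (fun t _ => hF t)
      (((hQcont.pow 2).mul continuous_id).intervalIntegrable 0 s)]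
    rw [zero_pow (by omega : 2*m+2 ≠ 0)]
    ring
  have hAv : ∀ s:ℝ, Aθ s = -(2*((m:ℝ)+1)) * s^(2*m+2)/(1+s^(2*m+2)) := by
    intro s
    rw [hA s, hInt s]
    have h1 := hdne s
    set u := s^(2*m+2)
    field_simp
    ring
  have key : ∀ s:ℝ, ((m:ℝ) + Aθ s) * Q s = s * dQ s := by
    intro s
    obtain ⟨m', hm'⟩ : ∃ m', m = m'+1 := ⟨m-1, by omega⟩
    subst hm'
    rw [hAv s, hQ' s, hdQ]
    simp only [Nat.add_sub_cancel]
    have h1 := hdne s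
    field_simp
    ring
  have keyC : ∀ s:ℝ, ((m:ℂ) + (Aθ s:ℂ)) * (Q s:ℂ) = (s:ℂ) * (dQ s:ℂ) := by
    intro s
    have := congrArg (Complex.ofReal) (key s)
    push_cast at this ⊢
    exact this
  -- real parts of the purely imaginary functions vanish
  have hvre : ∀ t:ℝ, ((Complex.I * (t:ℂ)^2 * (Q t:ℂ)).re) = 0 := by
    intro t
    have h : Complex.I * (t:ℂ)^2 * (Q t:ℂ) = Complex.ofReal (t^2*Q t) * Complex.I := by
      push_cast; ring
    rw [h, Complex.mul_I_re, Complex.ofReal_im, neg_zero]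
  have hwre : ∀ t:ℝ, ((Complex.I * (t:ℂ) * (Q t:ℂ)).re) = 0 := by
    intro t
    have h : Complex.I * (t:ℂ) * (Q t:ℂ) = Complex.ofReal (t*Q t) * Complex.I := by
      push_cast; ring
    rw [h, Complex.mul_I_re, Complex.ofReal_im, neg_zero]
  have hgre : ∀ t:ℝ, ((2 * Complex.I * (t:ℂ) * (Q t:ℂ)).re) = 0 := by
    intro t
    have h : 2 * Complex.I * (t:ℂ) * (Q t:ℂ) = Complex.ofReal (2*t*Q t) * Complex.I := by
      push_cast; ring
    rw [h, Complex.mul_I_re, Complex.ofReal_im, neg_zero]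
  -- derivative of i s² Q
  have hv : ∀ r:ℝ, deriv (fun s:ℝ => Complex.I * (s:ℂ)^2 * (Q s:ℂ)) r
      = Complex.ofReal (2*r*Q r + r^2*dQ r) * Complex.I := by
    intro r
    have h1 : HasDerivAt (fun s:ℝ => s^2 * Q s) (2*r^1*Q r + r^2*dQ r) r := by
      exact ((hasDerivAt_pow 2 r).mul (hQd r)).congr_deriv (by norm_num)
    have h2 := (h1.ofReal_comp).mul_const Complex.I
    have h3 : (fun s:ℝ => Complex.I * (s:ℂ)^2 * (Q s:ℂ))
        = fun s:ℝ => Complex.ofReal (s^2 * Q s) * Complex.I := by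
      funext s; push_cast; ring
    rw [h3, h2.deriv]; push_cast; ring
  -- derivative of i s Q
  have hw : ∀ r:ℝ, deriv (fun s:ℝ => Complex.I * (s:ℂ) * (Q s:ℂ)) r
      = Complex.ofReal (Q r + r*dQ r) * Complex.I := by
    intro r
    have h1 : HasDerivAt (fun s:ℝ => s * Q s) (1*Q r + r*dQ r) r :=
      (hasDerivAt_id r).mul (hQd r)
    have h2 := (h1.ofReal_comp).mul_const Complex.I
    have h3 : (fun s:ℝ => Complex.I * (s:ℂ) * (Q s:ℂ))
        = fun s:ℝ => Complex.ofReal (s * Q s) * Complex.I := by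
      funext s; push_cast; ring
    rw [h3, h2.deriv]; push_cast; ring
  -- part (i), for every positive radius
  have part1 : ∀ r:ℝ, 0 < r →
      LQ (fun s => Complex.I * (s : ℂ) ^ 2 * (Q s : ℂ)) r
        = 2 * Complex.I * (r : ℂ) * (Q r : ℂ) := by
    intro r hr
    rw [hLQ _ r hr]
    have hI0 : (∫ t in (0:ℝ)..r, Q t * ((Complex.I * (t:ℂ)^2 * (Q t:ℂ)).re) * t) = 0 := by
      simp [hvre]
    rw [hI0, hv r]
    simp only [Complex.real_smul]
    have hk := keyC r
    have hrne : (r:ℂ) ≠ 0 := Complex.ofReal_ne_zero.mpr hr.ne'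
    push_cast
    field_simp
    linear_combination (-(Complex.I * (r:ℂ)^2)) * hk
  -- part (ii)
  have part2 : ∀ r:ℝ, 0 < r →
      LQs (fun s => Complex.I * (s : ℂ) * (Q s : ℂ)) r
        = -2 * Complex.I * ((Q r : ℂ) + (r : ℂ) * Complex.ofReal (deriv Q r)) := by
    intro r hr
    rw [hLQs _ r hr]
    have hI0 : (∫ s in Set.Ioi r, Q s * ((Complex.I * (s:ℂ) * (Q s:ℂ)).re)) = 0 := by
      simp [hwre]
    rw [hI0, hw r, hderivQ r]
    simp only [Complex.real_smul]
    have hk := keyC r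
    have hrne : (r:ℂ) ≠ 0 := Complex.ofReal_ne_zero.mpr hr.ne'
    push_cast
    field_simp
    linear_combination (-Complex.I) * hk
  intro r hr
  refine ⟨part1 r hr, part2 r hr, ?_⟩
  -- part (iii)
  rw [hLQs _ r hr]
  have hEq : LQ (fun s => Complex.I * (s : ℂ) ^ 2 * (Q s : ℂ))
      =ᶠ[nhds r] fun s:ℝ => 2 * Complex.I * (s:ℂ) * (Q s:ℂ) :=
    Filter.eventually_of_mem (Ioi_mem_nhds hr) (fun s hs => part1 s hs)
  have hderivg : deriv (LQ (fun s => Complex.I * (s : ℂ) ^ 2 * (Q s : ℂ))) r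
      = Complex.ofReal (Q r + r*dQ r) * (2*Complex.I) := by
    rw [hEq.deriv_eq]
    have h1 : HasDerivAt (fun s:ℝ => s * Q s) (1*Q r + r*dQ r) r :=
      (hasDerivAt_id r).mul (hQd r)
    have h2 := (h1.ofReal_comp).mul_const (2*Complex.I)
    have h3 : (fun s:ℝ => 2 * Complex.I * (s:ℂ) * (Q s:ℂ))
        = fun s:ℝ => Complex.ofReal (s * Q s) * (2*Complex.I) := by
      funext s; push_cast; ring
    rw [h3, h2.deriv]; push_cast; ring
  have hgr : LQ (fun s => Complex.I * (s : ℂ) ^ 2 * (Q s : ℂ)) r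
      = 2 * Complex.I * (r:ℂ) * (Q r:ℂ) := part1 r hr
  have hI0 : (∫ s in Set.Ioi r,
      Q s * ((LQ (fun s => Complex.I * (s : ℂ) ^ 2 * (Q s : ℂ)) s).re)) = 0 := by
    rw [MeasureTheory.setIntegral_congr_fun measurableSet_Ioi
      (g := fun _ => (0:ℝ)) (fun s hs => by
        rw [part1 s (hr.trans hs)]; simp [hgre])]
    simp
  rw [hderivg, hgr, hI0, hderivQ r]
  simp only [Complex.real_smul]
  have hk := keyC r
  have hrne : (r:ℂ) ≠ 0 := Complex.ofReal_ne_zero.mpr hr.ne'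
  push_cast
  field_simp
  linear_combination (-(2 * Complex.I)) * hk
end

section
/- Let m ≥ 1 be an integer, Q(r) = √8 (m+1) r^m / (1 + r^{2(m+1)}), and A_θ[Q](r) = −2(m+1) r^{2(m+1)}/(1+r^{2(m+1)}). Define Ṽ(r) := (m + 2 + A_θ[Q](r))² + r² Q(r)²/2. Then Ṽ(r) = (m+2)² − 4(m+1)· r^{2(m+1)}/(1+r^{2(m+1)}) for all r > 0; in particular m² < Ṽ(r) < (m+2)² for all r > 0. -/
open MeasureTheory

/-- Closed form and bounds of the repulsive potential `Ṽ = (m+2+A_θ[Q])² + r²Q²/2`. -/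
theorem potential_closed_form (m : ℕ) (hm : 1 ≤ m) (Q Aθ V : ℝ → ℝ)
    (hQ : ∀ r : ℝ, Q r = Real.sqrt 8 * ((m : ℝ) + 1) * r ^ m / (1 + r ^ (2 * (m + 1))))
    (hA : ∀ r : ℝ, Aθ r = -(2 * ((m : ℝ) + 1)) * r ^ (2 * (m + 1)) / (1 + r ^ (2 * (m + 1))))
    (hV : ∀ r : ℝ, V r = ((m : ℝ) + 2 + Aθ r) ^ 2 + r ^ 2 * Q r ^ 2 / 2) :
    ∀ r : ℝ, 0 < r →
      V r = ((m : ℝ) + 2) ^ 2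
          - 4 * ((m : ℝ) + 1) * (r ^ (2 * (m + 1)) / (1 + r ^ (2 * (m + 1)))) ∧
      (m : ℝ) ^ 2 < V r ∧ V r < ((m : ℝ) + 2) ^ 2 := by
  intro r hr
  have hs : (0 : ℝ) < r ^ (2 * (m + 1)) := pow_pos hr _
  have hD : (0 : ℝ) < 1 + r ^ (2 * (m + 1)) := by linarith
  have h8 : Real.sqrt 8 ^ 2 = 8 := Real.sq_sqrt (by norm_num)
  have hpow : r ^ 2 * (r ^ m) ^ 2 = r ^ (2 * (m + 1)) := by
    rw [← pow_mul, ← pow_add]; ring_nf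
  have hclosed : V r = ((m : ℝ) + 2) ^ 2
      - 4 * ((m : ℝ) + 1) * (r ^ (2 * (m + 1)) / (1 + r ^ (2 * (m + 1)))) := by
    rw [hV, hA, hQ]
    rw [div_pow, mul_pow, mul_pow, h8]
    have key : r ^ 2 * (8 * ((m : ℝ) + 1) ^ 2 * (r ^ m) ^ 2 / (1 + r ^ (2 * (m + 1))) ^ 2) / 2
        = 4 * ((m : ℝ) + 1) ^ 2 * r ^ (2 * (m + 1)) / (1 + r ^ (2 * (m + 1))) ^ 2 := by
      rw [← hpow]; ring
    rw [key]
    generalize r ^ (2 * (m + 1)) = s at hD ⊢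
    field_simp
    ring
  have hfrac1 : r ^ (2 * (m + 1)) / (1 + r ^ (2 * (m + 1))) < 1 := by
    rw [div_lt_one hD]; linarith
  have hfrac0 : 0 < r ^ (2 * (m + 1)) / (1 + r ^ (2 * (m + 1))) := div_pos hs hD
  have hm1 : (0 : ℝ) < (m : ℝ) + 1 := by positivity
  refine ⟨hclosed, ?_, ?_⟩
  · rw [hclosed]; nlinarith
  · rw [hclosed]; nlinarith
end

section
/- Let m ≥ 1 be an integer, Q(r) = √8 (m+1) r^m / (1 + r^{2(m+1)}), A_θ[Q](r) = −(1/2)∫₀^r Q² r′dr′, A_Q f := ∂_r f − ((m+1+A_θ[Q])/r) f and A_Q* g := −∂_r g − (1/r) g − ((m+1+A_θ[Q])/r) g. Then for every C² function g : (0,∞) → ℂ one has A_Q(A_Q* g) = −∂_{rr} g − (1/r)∂_r g + (Ṽ(r)/r²) g, where Ṽ(r) = (m+2+A_θ[Q](r))² + r²Q(r)²/2; moreover r ∂_r Ṽ(r) = −r² Q(r)² ≤ 0 for all r > 0 (repulsivity of the potential). -/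
open MeasureTheory intervalIntegral

/-- Factorization `A_Q A_Q* = −∂_rr − (1/r)∂_r + Ṽ/r²` and repulsivity `r∂_rṼ = −r²Q² ≤ 0`. -/
theorem AQ_AQstar_factorization (m : ℕ) (hm : 1 ≤ m) (Q Aθ V : ℝ → ℝ)
    (hQ : ∀ r : ℝ, Q r = Real.sqrt 8 * ((m : ℝ) + 1) * r ^ m / (1 + r ^ (2 * (m + 1))))
    (hA : ∀ r : ℝ, Aθ r = -(1/2) * ∫ t in (0:ℝ)..r, Q t ^ 2 * t)
    (hV : ∀ r : ℝ, V r = ((m : ℝ) + 2 + Aθ r) ^ 2 + r ^ 2 * Q r ^ 2 / 2)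
    (g : ℝ → ℂ) (hg : ContDiffOn ℝ 2 g (Set.Ioi 0)) :
    ∀ r : ℝ, 0 < r →
      (deriv (fun s : ℝ => -deriv g s - s⁻¹ • g s - ((((m : ℝ) + 1 + Aθ s) / s) • g s)) r
        - ((((m : ℝ) + 1 + Aθ r) / r)
            • (-deriv g r - r⁻¹ • g r - ((((m : ℝ) + 1 + Aθ r) / r) • g r))))
        = -deriv (deriv g) r - r⁻¹ • deriv g r + ((V r / r ^ 2) • g r) ∧
      r * deriv V r = -(r ^ 2 * Q r ^ 2) ∧ r * deriv V r ≤ 0 := by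
  obtain ⟨k, rfl⟩ : ∃ k, m = k + 1 := ⟨m - 1, by omega⟩
  have sqrt8 : Real.sqrt 8 ^ 2 = 8 := Real.sq_sqrt (by norm_num)
  have hD : ∀ x : ℝ, 0 < 1 + x ^ (2 * (k + 1 + 1)) := by
    intro x
    have h0 : (0:ℝ) ≤ x ^ (2 * (k + 1 + 1)) := by
      rw [pow_mul]; exact pow_nonneg (sq_nonneg x) _
    linarith
  have hQfe : Q = fun x : ℝ =>
      Real.sqrt 8 * (((k:ℝ) + 1) + 1) * x ^ (k+1) / (1 + x ^ (2*(k+1+1))) := by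
    funext x; rw [hQ x]; push_cast; ring
  have hQc : Continuous Q := by
    rw [hQfe]
    exact (continuous_const.mul (continuous_pow _)).div
      (continuous_const.add (continuous_pow _)) fun x => (hD x).ne'
  -- FTC primitive of Q² t
  have hG : ∀ x : ℝ, HasDerivAt
      (fun t : ℝ => 4*((k:ℝ)+2) * t ^ (2*(k+1+1)) / (1 + t ^ (2*(k+1+1))))
      (Q x ^ 2 * x) x := by
    intro x
    have h1 : HasDerivAt (fun t : ℝ => 4*((k:ℝ)+2) * t ^ (2*(k+1+1)))
        (4*((k:ℝ)+2) * (↑(2*(k+1+1)) * x ^ (2*(k+1+1) - 1))) x :=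
      (hasDerivAt_pow _ x).const_mul _
    have h2 : HasDerivAt (fun t : ℝ => 1 + t ^ (2*(k+1+1)))
        (↑(2*(k+1+1)) * x ^ (2*(k+1+1) - 1)) x :=
      (hasDerivAt_pow _ x).const_add 1
    have h3 := h1.div h2 (hD x).ne'
    refine h3.congr_deriv ?_
    have e1 : 2*(k+1+1) - 1 = 2*k+3 := by omega
    rw [hQ x, e1, div_pow, mul_pow, mul_pow, sqrt8]
    have hx := (hD x).ne'
    field_simp
    push_cast
    ring
  -- explicit value of Aθ
  have hAval : ∀ x : ℝ, Aθ x = -2*((k:ℝ)+2) * x ^ (2*(k+1+1)) / (1 + x ^ (2*(k+1+1))) := by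
    intro x
    have hint : IntervalIntegrable (fun t : ℝ => Q t ^ 2 * t) MeasureTheory.volume 0 x :=
      ((hQc.pow 2).mul continuous_id).intervalIntegrable _ _
    rw [hA x, intervalIntegral.integral_eq_sub_of_hasDerivAt (fun t _ => hG t) hint]
    rw [zero_pow (by omega : 2*(k+1+1) ≠ 0)]
    have hx := (hD x).ne'
    field_simp
    ring
  intro r hr
  have hr0 : r ≠ 0 := ne_of_gt hr
  have hDr : (1 : ℝ) + r ^ (2*(k+1+1)) ≠ 0 := (hD r).ne'
  -- derivative of Aθ at r
  have hAd : HasDerivAt Aθ (-(1/2) * (Q r ^ 2 * r)) r := by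
    have hAfe : Aθ = fun x : ℝ =>
        -2*((k:ℝ)+2) * x ^ (2*(k+1+1)) / (1 + x ^ (2*(k+1+1))) := funext hAval
    rw [hAfe]
    have h1 : HasDerivAt (fun t : ℝ => -2*((k:ℝ)+2) * t ^ (2*(k+1+1)))
        (-2*((k:ℝ)+2) * (↑(2*(k+1+1)) * r ^ (2*(k+1+1) - 1))) r :=
      (hasDerivAt_pow _ r).const_mul _
    have h2 : HasDerivAt (fun t : ℝ => 1 + t ^ (2*(k+1+1)))
        (↑(2*(k+1+1)) * r ^ (2*(k+1+1) - 1)) r :=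
      (hasDerivAt_pow _ r).const_add 1
    have h3 := h1.div h2 hDr
    refine h3.congr_deriv ?_
    have e1 : 2*(k+1+1) - 1 = 2*k+3 := by omega
    rw [hQ r, e1, div_pow, mul_pow, mul_pow, sqrt8]
    field_simp
    push_cast
    ring
  -- derivative of Q at r
  obtain ⟨q', hq'def⟩ : ∃ q' : ℝ, q' =
      (Real.sqrt 8 * (((k:ℝ)+1)+1) * (((k:ℝ)+1) * r ^ k) * (1 + r ^ (2*(k+1+1)))
        - Real.sqrt 8 * (((k:ℝ)+1)+1) * r ^ (k+1) * ((2*((k:ℝ)+1+1)) * r ^ (2*k+3)))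
        / (1 + r ^ (2*(k+1+1))) ^ 2 := ⟨_, rfl⟩
  have hQd : HasDerivAt Q q' r := by
    rw [hQfe]
    have h1 : HasDerivAt (fun t : ℝ => Real.sqrt 8 * (((k:ℝ)+1)+1) * t ^ (k+1))
        (Real.sqrt 8 * (((k:ℝ)+1)+1) * (↑(k+1) * r ^ (k+1-1))) r :=
      (hasDerivAt_pow _ r).const_mul _
    have h2 : HasDerivAt (fun t : ℝ => 1 + t ^ (2*(k+1+1)))
        (↑(2*(k+1+1)) * r ^ (2*(k+1+1) - 1)) r :=
      (hasDerivAt_pow _ r).const_add 1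
    have h3 := h1.div h2 hDr
    refine h3.congr_deriv ?_
    have e1 : 2*(k+1+1) - 1 = 2*k+3 := by omega
    have e2 : k+1-1 = k := by omega
    rw [hq'def, e1, e2]
    push_cast
    ring
  -- key identity r q' = (m + Aθ) Q
  have hq'r : r * q' = (((k:ℝ)+1) + Aθ r) * Q r := by
    rw [hq'def, hQ r, hAval r]
    field_simp
    push_cast
    ring
  -- derivative of V at r
  have hVfe : V = fun x : ℝ => ((↑(k+1):ℝ) + 2 + Aθ x) ^ 2 + x ^ 2 * Q x ^ 2 / 2 :=
    funext hV
  have hVd : HasDerivAt V (2 * ((↑(k+1):ℝ) + 2 + Aθ r) * (-(1/2) * (Q r ^ 2 * r))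
      + (2 * r * Q r ^ 2 + r ^ 2 * (2 * Q r * q')) / 2) r := by
    rw [hVfe]
    have h := ((hAd.const_add ((↑(k+1):ℝ)+2)).pow 2).add
      (((hasDerivAt_pow 2 r).mul (hQd.pow 2)).div_const 2)
    refine h.congr_deriv ?_
    norm_num [Pi.pow_apply]
  have hpart2 : r * deriv V r = -(r ^ 2 * Q r ^ 2) := by
    rw [hVd.deriv]
    push_cast
    push_cast at hq'r
    linear_combination (r^2 * Q r) * hq'r
  have hpart3 : r * deriv V r ≤ 0 := by
    rw [hpart2]
    have : (0:ℝ) ≤ r ^ 2 * Q r ^ 2 := by positivity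
    linarith
  -- regularity of g
  have hg2 : ContDiffOn ℝ (1+1) g (Set.Ioi 0) := hg
  rw [contDiffOn_succ_iff_deriv_of_isOpen isOpen_Ioi] at hg2
  obtain ⟨hgdiff, -, hgd1⟩ := hg2
  have hmem : Set.Ioi (0:ℝ) ∈ nhds r := isOpen_Ioi.mem_nhds hr
  have hgd : HasDerivAt g (deriv g r) r := (hgdiff.differentiableAt hmem).hasDerivAt
  have hgdd : HasDerivAt (deriv g) (deriv (deriv g) r) r :=
    ((hgd1.differentiableOn one_ne_zero).differentiableAt hmem).hasDerivAt
  -- derivative of the full A_Q* expression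
  have hW : HasDerivAt (fun s : ℝ => ((↑(k+1):ℝ) + 1 + Aθ s) / s)
      (((-(1/2) * (Q r ^ 2 * r)) * r - ((↑(k+1):ℝ) + 1 + Aθ r) * 1) / r ^ 2) r :=
    (hAd.const_add _).div (hasDerivAt_id r) hr0
  have hF : HasDerivAt
      (fun s : ℝ => -deriv g s - s⁻¹ • g s - ((((↑(k+1):ℝ) + 1 + Aθ s) / s) • g s))
      (-deriv (deriv g) r - (r⁻¹ • deriv g r + (-(r^2)⁻¹) • g r)
        - ((((↑(k+1):ℝ) + 1 + Aθ r) / r) • deriv g r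
            + (((-(1/2) * (Q r ^ 2 * r)) * r - ((↑(k+1):ℝ) + 1 + Aθ r) * 1) / r ^ 2) • g r)) r :=
    ((hgdd.neg).sub ((hasDerivAt_inv hr0).smul hgd)).sub (hW.smul hgd)
  refine ⟨?_, hpart2, hpart3⟩
  rw [hF.deriv, hV r]
  match_scalars
  · field_simp
  · field_simp
    ring
  · field_simp
    ring
end

section
/- Let m ≥ 1 be an integer, Q(r) = √8 (m+1) r^m / (1 + r^{2(m+1)}), A_θ[Q](r) = −(1/2)∫₀^r Q² r′dr′. Define L_Q v := ∂_r v − ((m+A_θ[Q])/r) v + Q·(1/r)∫₀^r Re(\overline{Q}v) r′dr′, L_Q* w := −∂_r w − (1/r)w − ((m+A_θ[Q])/r)w + Q∫_r^∞ Q Re(w) ds, A_Q f := ∂_r f − ((m+1+A_θ[Q])/r) f, and A_Q* g := −∂_r g − (1/r)g − ((m+1+A_θ[Q])/r)g. Then for every smooth compactly supported f : (0,∞) → ℂ one has the conjugation identity L_Q( i · L_Q* f ) = i · A_Q*( A_Q f ). -/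
set_option maxHeartbeats 1000000

open MeasureTheory intervalIntegral

/-- The conjugation identity `L_Q ∘ i ∘ L_Q* = i ∘ A_Q* ∘ A_Q`. -/
theorem conjugation_identity (m : ℕ) (hm : 1 ≤ m) (Q Aθ : ℝ → ℝ)
    (LQ LQs AQ AQs : (ℝ → ℂ) → ℝ → ℂ)
    (hQ : ∀ r : ℝ, Q r = Real.sqrt 8 * ((m : ℝ) + 1) * r ^ m / (1 + r ^ (2 * (m + 1))))
    (hA : ∀ r : ℝ, Aθ r = -(1/2) * ∫ t in (0:ℝ)..r, Q t ^ 2 * t)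
    (hLQ : ∀ (v : ℝ → ℂ) (r : ℝ), 0 < r →
      LQ v r = deriv v r - ((((m : ℝ) + Aθ r) / r) • v r)
        + Complex.ofReal (Q r * ((1/r) * ∫ t in (0:ℝ)..r, Q t * (v t).re * t)))
    (hLQs : ∀ (w : ℝ → ℂ) (r : ℝ), 0 < r →
      LQs w r = -deriv w r - (r⁻¹ • w r) - ((((m : ℝ) + Aθ r) / r) • w r)
        + Complex.ofReal (Q r * ∫ s in Set.Ioi r, Q s * (w s).re))
    (hAQ : ∀ (v : ℝ → ℂ) (r : ℝ), 0 < r →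
      AQ v r = deriv v r - ((((m : ℝ) + 1 + Aθ r) / r) • v r))
    (hAQs : ∀ (w : ℝ → ℂ) (r : ℝ), 0 < r →
      AQs w r = -deriv w r - (r⁻¹ • w r) - ((((m : ℝ) + 1 + Aθ r) / r) • w r))
    (f : ℝ → ℂ) (hf : ContDiff ℝ (⊤ : ℕ∞) f) (hcs : HasCompactSupport f)
    (hsupp : tsupport f ⊆ Set.Ioi 0) :
    ∀ r : ℝ, 0 < r →
      LQ (fun s => Complex.I * LQs f s) r = Complex.I * AQs (AQ f) r := by
  intro r hr
  obtain ⟨m', rfl⟩ : ∃ m'', m = m'' + 1 := ⟨m - 1, (Nat.succ_pred_eq_of_pos hm).symm⟩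
  -- abbreviations
  have h8 : Real.sqrt 8 ^ 2 = 8 := Real.sq_sqrt (by norm_num)
  set c : ℝ := Real.sqrt 8 * ((m' : ℝ) + 2) with hc
  have hQf : ∀ x : ℝ, Q x = c * x ^ (m' + 1) / (1 + x ^ (2 * m' + 4)) := by
    intro x
    rw [hQ x, show 2 * (m' + 1 + 1) = 2 * m' + 4 from by omega]
    push_cast
    rw [hc]
    ring_nf
  have hdpos : ∀ x : ℝ, 0 < 1 + x ^ (2 * m' + 4) := by
    intro x
    have : (0:ℝ) ≤ x ^ (2 * m' + 4) := by
      rw [show 2 * m' + 4 = 2 * (m' + 2) from by omega, pow_mul]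
      exact pow_nonneg (sq_nonneg x) _
    linarith
  have hQcont : Continuous Q := by
    have : Q = fun x => c * x ^ (m' + 1) / (1 + x ^ (2 * m' + 4)) := funext hQf
    rw [this]
    exact (continuous_const.mul (continuous_pow _)).div
      (continuous_const.add (continuous_pow _)) (fun x => (hdpos x).ne')
  have hdD : ∀ x : ℝ, HasDerivAt (fun x : ℝ => 1 + x ^ (2 * m' + 4))
      ((2 * m' + 4 : ℕ) * x ^ (2 * m' + 3)) x := by
    intro x
    simpa using (hasDerivAt_pow (2 * m' + 4) x).const_add 1
  set QD : ℝ → ℝ := fun x => (c * ((m' + 1 : ℕ) * x ^ m') * (1 + x ^ (2 * m' + 4))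
        - c * x ^ (m' + 1) * ((2 * m' + 4 : ℕ) * x ^ (2 * m' + 3))) / (1 + x ^ (2 * m' + 4)) ^ 2
    with hQDdef
  have hQD : ∀ x : ℝ, HasDerivAt Q (QD x) x := by
    intro x
    have hQf' : Q = fun x => c * x ^ (m' + 1) / (1 + x ^ (2 * m' + 4)) := funext hQf
    rw [hQf', hQDdef]
    simpa [Pi.div_def] using ((hasDerivAt_pow (m' + 1) x).const_mul c).div (hdD x) (hdpos x).ne'
  -- closed form for Aθ
  have haθ : ∀ x : ℝ, Aθ x = -(2 * ((m' : ℝ) + 2)) * x ^ (2 * m' + 4) / (1 + x ^ (2 * m' + 4)) := by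
    intro x
    rw [hA x]
    have hFTC : ∫ t in (0:ℝ)..x, Q t ^ 2 * t
        = (-(4 * ((m' : ℝ) + 2)) / (1 + x ^ (2 * m' + 4)))
          - (-(4 * ((m' : ℝ) + 2)) / (1 + (0:ℝ) ^ (2 * m' + 4))) := by
      apply intervalIntegral.integral_eq_sub_of_hasDerivAt
      · intro t _
        have hD : HasDerivAt (fun t : ℝ => -(4 * ((m' : ℝ) + 2)) / (1 + t ^ (2 * m' + 4)))
            ((0 * (1 + t ^ (2 * m' + 4)) - (-(4 * ((m' : ℝ) + 2))) * ((2 * m' + 4 : ℕ) * t ^ (2 * m' + 3))) / (1 + t ^ (2 * m' + 4)) ^ 2) t :=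
          (hasDerivAt_const t _).div (hdD t) (hdpos t).ne'
        refine hD.congr_deriv (Eq.symm ?_)
        rw [hQf t]
        have e1 : t ^ (2 * m' + 3) = t ^ (m' + 1) * t ^ (m' + 1) * t := by
          rw [← pow_add, ← pow_succ]; congr 1; omega
        field_simp
        rw [e1, hc]
        ring_nf
        rw [h8]
        push_cast
        ring
      · exact ((hQcont.pow 2).mul continuous_id).intervalIntegrable _ _
    rw [hFTC]
    rw [zero_pow (by omega : 2 * m' + 4 ≠ 0)]
    field_simp [(hdpos x).ne']
    ring
  -- derivative of Aθ
  have hADval : ∀ x : ℝ, HasDerivAt Aθ (-(1/2) * (Q x ^ 2 * x)) x := by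
    intro x
    have hAf : Aθ = fun x => -(2 * ((m' : ℝ) + 2)) * x ^ (2 * m' + 4) / (1 + x ^ (2 * m' + 4)) :=
      funext haθ
    have hD : HasDerivAt (fun x : ℝ => -(2 * ((m' : ℝ) + 2)) * x ^ (2 * m' + 4) / (1 + x ^ (2 * m' + 4)))
        ((-(2 * ((m' : ℝ) + 2)) * ((2 * m' + 4 : ℕ) * x ^ (2 * m' + 3)) * (1 + x ^ (2 * m' + 4))
          - -(2 * ((m' : ℝ) + 2)) * x ^ (2 * m' + 4) * ((2 * m' + 4 : ℕ) * x ^ (2 * m' + 3)))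
          / (1 + x ^ (2 * m' + 4)) ^ 2) x :=
      ((hasDerivAt_pow _ x).const_mul _).div (hdD x) (hdpos x).ne'
    rw [hAf]
    refine hD.congr_deriv (Eq.symm ?_)
    rw [hQf x]
    have e1 : x ^ (2 * m' + 3) = x ^ (m' + 1) * x ^ (m' + 1) * x := by
      rw [← pow_add, ← pow_succ]; congr 1; omega
    field_simp [(hdpos x).ne']
    rw [e1, hc]
    ring_nf
    rw [h8]
    push_cast
    ring
  -- Bogomol'nyi identity
  have hBog : ∀ x : ℝ, 0 < x → QD x = (((m' + 1 : ℕ) : ℝ) + Aθ x) / x * Q x := by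
    intro x hx
    rw [hQDdef, haθ x, hQf x]
    push_cast
    field_simp [hx.ne', (hdpos x).ne']
    ring
  -- basic facts about f
  have hf' : ContDiff ℝ (⊤ : ℕ∞) f := hf.of_le (by simp)
  have hfd : Differentiable ℝ f := hf.differentiable (by simp)
  have hfd1 : Differentiable ℝ (deriv f) := (contDiff_infty_iff_deriv.mp hf').2.differentiable (by simp)
  have hfc1 : Continuous (deriv f) := hfd1.continuous
  have hre_cont : Continuous fun t => (f t).re := Complex.continuous_re.comp hfd.continuous
  have him_cont : Continuous fun t => (f t).im := Complex.continuous_im.comp hfd.continuous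
  have hh_cont : Continuous fun t => Q t * (f t).re := hQcont.mul hre_cont
  have hre_cs : HasCompactSupport fun t => Q t * (f t).re := by
    have h1 : HasCompactSupport fun t => (f t).re := hcs.comp_left (g := Complex.re) rfl
    exact h1.mul_left
  have hh_int : Integrable fun t => Q t * (f t).re := hh_cont.integrable_of_hasCompactSupport hre_cs
  -- support bound
  obtain ⟨R, hRr, hRsupp⟩ : ∃ R, r < R ∧ ∀ t, R ≤ t → f t = 0 := by
    obtain ⟨R₀, hR₀⟩ := hcs.isCompact.bddAbove
    refine ⟨max R₀ r + 1, lt_of_le_of_lt (le_max_right R₀ r) (lt_add_one _), fun t ht => ?_⟩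
    apply image_eq_zero_of_notMem_tsupport
    intro hmem
    have h1 : t ≤ R₀ := hR₀ hmem
    have h2 : R₀ ≤ max R₀ r := le_max_left _ _
    linarith
  -- the tail integral J
  have hJeq : ∀ s : ℝ, s < R →
      (∫ t in Set.Ioi s, Q t * (f t).re) = ∫ t in s..R, Q t * (f t).re := by
    intro s hs
    rw [intervalIntegral.integral_of_le hs.le, ← Set.Ioc_union_Ioi_eq_Ioi hs.le,
      MeasureTheory.setIntegral_union (Set.Ioc_disjoint_Ioi le_rfl) measurableSet_Ioi
        hh_int.integrableOn hh_int.integrableOn]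
    have hz : (∫ t in Set.Ioi R, Q t * (f t).re) = 0 :=
      setIntegral_eq_zero_of_forall_eq_zero fun t ht => by
        rw [hRsupp t (le_of_lt ht)]; simp
    rw [hz, add_zero]
  have hJD : ∀ s : ℝ, HasDerivAt (fun u => ∫ t in u..R, Q t * (f t).re)
      (-(Q s * (f s).re)) s := by
    intro s
    exact intervalIntegral.integral_hasDerivAt_left hh_int.intervalIntegrable
      (hh_cont.stronglyMeasurableAtFilter _ _) hh_cont.continuousAt
  have hQDcont : Continuous QD := by
    rw [hQDdef]
    exact Continuous.div (by fun_prop) (by fun_prop) fun x => pow_ne_zero 2 (hdpos x).ne'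
  have hQ0 : Q 0 = 0 := by rw [hQf 0]; norm_num
  have him : ∀ t : ℝ, HasDerivAt (fun t => (f t).im) ((deriv f t).im) t := fun t => by
    simpa [Function.comp_def] using Complex.imCLM.hasFDerivAt.comp_hasDerivAt t (hfd t).hasDerivAt
  have hφD : ∀ t : ℝ, HasDerivAt (fun t => t * (Q t * (f t).im))
      (Q t * (f t).im + t * (QD t * (f t).im + Q t * (deriv f t).im)) t := by
    intro t
    have h1 := (hQD t).mul (him t)
    simpa [Pi.mul_def] using (hasDerivAt_id t).mul h1
  have hψcont : Continuous fun t => Q t * (f t).im + t * (QD t * (f t).im + Q t * (deriv f t).im) :=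
    (hQcont.mul him_cont).add (continuous_id.mul
      ((hQDcont.mul him_cont).add (hQcont.mul (Complex.continuous_im.comp hfc1))))
  -- the key integral K
  have hK : (∫ t in (0:ℝ)..r, Q t * ((Complex.I * LQs f t).re) * t) = r * (Q r * (f r).im) := by
    have hcongr : Set.EqOn (fun t => Q t * ((Complex.I * LQs f t).re) * t)
        (fun t => Q t * (f t).im + t * (QD t * (f t).im + Q t * (deriv f t).im))
        (Set.uIcc 0 r) := by
      intro t ht
      rw [Set.uIcc_of_le hr.le] at ht
      rcases eq_or_lt_of_le ht.1 with h0 | h0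
      · simp only [← h0, hQ0]
        ring
      · have hre : (Complex.I * LQs f t).re = -((LQs f t).im) := by simp [Complex.mul_re]
        simp only [hre, hLQs f t h0, Complex.add_im, Complex.sub_im, Complex.neg_im,
          Complex.real_smul, Complex.mul_im, Complex.ofReal_re, Complex.ofReal_im,
          Complex.mul_re, Complex.I_re, Complex.I_im]
        rw [hBog t h0]
        field_simp
        ring
    rw [intervalIntegral.integral_congr hcongr,
      intervalIntegral.integral_eq_sub_of_hasDerivAt (fun t _ => hφD t)
        (hψcont.intervalIntegrable 0 r)]
    simp
  -- derivative of the coefficient b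
  have hbD : HasDerivAt (fun s => -((((m' + 1 : ℕ) : ℝ) + 1 + Aθ s) / s))
      (-((-(1/2) * (Q r ^ 2 * r) * r - ((((m' + 1 : ℕ) : ℝ) + 1 + Aθ r)) * 1) / r ^ 2)) r :=
    (((hADval r).const_add ((((m' + 1 : ℕ) : ℝ) + 1))).div (hasDerivAt_id r) hr.ne').neg
  have hD3 : HasDerivAt (fun s => ((-((((m' + 1 : ℕ) : ℝ) + 1 + Aθ s) / s) : ℝ) : ℂ) * f s)
      (((-((-(1/2) * (Q r ^ 2 * r) * r - ((((m' + 1 : ℕ) : ℝ) + 1 + Aθ r)) * 1) / r ^ 2) : ℝ) : ℂ) * f r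
        + ((-((((m' + 1 : ℕ) : ℝ) + 1 + Aθ r) / r) : ℝ) : ℂ) * deriv f r) r :=
    hbD.ofReal_comp.mul (hfd r).hasDerivAt
  -- eventual identification of I * LQs f
  have hEev : (fun s => Complex.I * LQs f s) =ᶠ[nhds r]
      fun s => Complex.I * (-(deriv f s)
        + ((-((((m' + 1 : ℕ) : ℝ) + 1 + Aθ s) / s) : ℝ) : ℂ) * f s
        + ((Q s * ∫ t in s..R, Q t * (f t).re : ℝ) : ℂ)) := by
    filter_upwards [Ioo_mem_nhds hr hRr] with s hs
    rw [hLQs f s hs.1, hJeq s hs.2]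
    have hs0 : (s : ℂ) ≠ 0 := Complex.ofReal_ne_zero.mpr hs.1.ne'
    simp only [Complex.real_smul]
    push_cast
    field_simp
    ring
  have hvD : HasDerivAt (fun s => Complex.I * LQs f s)
      (Complex.I * (-(deriv (deriv f) r)
        + (((-((-(1/2) * (Q r ^ 2 * r) * r - ((((m' + 1 : ℕ) : ℝ) + 1 + Aθ r)) * 1) / r ^ 2) : ℝ) : ℂ) * f r
            + ((-((((m' + 1 : ℕ) : ℝ) + 1 + Aθ r) / r) : ℝ) : ℂ) * deriv f r)
        + ((QD r * (∫ t in r..R, Q t * (f t).re) + Q r * (-(Q r * (f r).re)) : ℝ) : ℂ))) r := by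
    refine HasDerivAt.congr_of_eventuallyEq ?_ hEev
    exact ((((hfd1 r).hasDerivAt.neg.add hD3).add ((hQD r).mul (hJD r)).ofReal_comp).const_mul
      Complex.I)
  have hvr : Complex.I * LQs f r = Complex.I * (-(deriv f r)
        + ((-((((m' + 1 : ℕ) : ℝ) + 1 + Aθ r) / r) : ℝ) : ℂ) * f r
        + ((Q r * ∫ t in r..R, Q t * (f t).re : ℝ) : ℂ)) := hEev.eq_of_nhds
  -- the AQ side
  have hAQev : AQ f =ᶠ[nhds r] fun s => deriv f s
      + ((-((((m' + 1 : ℕ) : ℝ) + 1 + Aθ s) / s) : ℝ) : ℂ) * f s := by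
    filter_upwards [Ioi_mem_nhds hr] with s hs
    rw [hAQ f s hs]
    simp only [Complex.real_smul]
    push_cast
    ring
  have hAQD : HasDerivAt (AQ f)
      (deriv (deriv f) r
        + (((-((-(1/2) * (Q r ^ 2 * r) * r - ((((m' + 1 : ℕ) : ℝ) + 1 + Aθ r)) * 1) / r ^ 2) : ℝ) : ℂ) * f r
            + ((-((((m' + 1 : ℕ) : ℝ) + 1 + Aθ r) / r) : ℝ) : ℂ) * deriv f r)) r :=
    HasDerivAt.congr_of_eventuallyEq ((hfd1 r).hasDerivAt.add hD3) hAQev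
  -- put everything together
  rw [hLQ _ r hr, hAQs _ r hr]
  rw [hK, hvD.deriv, hvr, hAQD.deriv, hAQ f r hr, hBog r hr]
  have hfr : f r = ((f r).re : ℂ) + ((f r).im : ℂ) * Complex.I := (Complex.re_add_im (f r)).symm
  set u : ℝ := (f r).re with hu
  set v : ℝ := (f r).im with hv
  rw [hfr]
  simp only [Complex.real_smul]
  generalize (∫ t in r..R, Q t * (f t).re) = j
  generalize deriv (deriv f) r = F2
  generalize deriv f r = F1
  generalize Q r = q
  generalize Aθ r = a
  rw [Complex.ext_iff]
  constructor <;>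
    · simp only [Complex.mul_re, Complex.mul_im, Complex.add_re, Complex.add_im, Complex.sub_re,
        Complex.sub_im, Complex.neg_re, Complex.neg_im, Complex.I_re, Complex.I_im,
        Complex.ofReal_re, Complex.ofReal_im]
      field_simp
      ring
end

section
/- Let V : (0,∞) → ℝ be C¹ and let f : (0,∞) → ℂ be smooth and compactly supported in (0,∞). Define H f := −∂_{rr} f − (1/r)∂_r f + (V(r)/r²) f and Λ f := f + r ∂_r f. Then Re ∫₀^∞ (H f)(r) \overline{(Λ f)(r)} r dr = ∫₀^∞ |∂_r f(r)|² r dr + ∫₀^∞ ( V(r) − (r ∂_r V(r))/2 ) |f(r)|²/r² · r dr. In particular, if r∂_rV ≤ 0 and V ≥ 0 on (0,∞), then Re∫₀^∞ (Hf)\overline{Λf} r dr ≥ ∫₀^∞ |∂_r f|² r dr + ∫₀^∞ V |f|²/r² · r dr ≥ 0. -/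
open MeasureTheory

private lemma hasDerivAt_cre {f : ℝ → ℂ} {c : ℂ} {r : ℝ} (h : HasDerivAt f c r) :
    HasDerivAt (fun t => (f t).re) c.re r := by
  exact (Complex.reCLM.hasFDerivAt.comp_hasDerivAt r h)

private lemma hasDerivAt_cim {f : ℝ → ℂ} {c : ℂ} {r : ℝ} (h : HasDerivAt f c r) :
    HasDerivAt (fun t => (f t).im) c.im r := by
  exact (Complex.imCLM.hasFDerivAt.comp_hasDerivAt r h)

private lemma cnorm_sq (z : ℂ) : ‖z‖ ^ 2 = z.re ^ 2 + z.im ^ 2 := by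
  rw [Complex.sq_norm, Complex.normSq_apply]; ring

private lemma aux_integrableOn {E : Type*} [NormedAddCommGroup E] {h : ℝ → E} {a b : ℝ}
    (hc : ContinuousOn h (Set.Icc a b)) (h0 : ∀ r ∉ Set.Ioo a b, h r = 0) :
    IntegrableOn h (Set.Ioi 0) := by
  have h1 : IntegrableOn h (Set.Icc a b) := hc.integrableOn_compact isCompact_Icc
  have h2 : IntegrableOn h (Set.Ioi 0 \ Set.Icc a b) := by
    refine MeasureTheory.integrableOn_zero.congr_fun
      (fun r hr => ?_) (measurableSet_Ioi.diff measurableSet_Icc)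
    exact (h0 r (fun hmem => hr.2 (Set.Ioo_subset_Icc_self hmem))).symm
  exact (h1.union h2).mono_set (fun r hr => by
    by_cases hmem : r ∈ Set.Icc a b
    · exact Or.inl hmem
    · exact Or.inr ⟨hr, hmem⟩)

private lemma aux_setIntegral {E : Type*} [NormedAddCommGroup E] [NormedSpace ℝ E]
    {h : ℝ → E} {a b : ℝ} (ha : 0 < a) (hab : a ≤ b) (h0 : ∀ r ∉ Set.Ioo a b, h r = 0) :
    ∫ r in Set.Ioi (0:ℝ), h r = ∫ r in a..b, h r := by
  rw [intervalIntegral.integral_of_le hab]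
  have he : Set.EqOn h ((Set.Ioc a b).indicator h) (Set.Ioi 0) := by
    intro r _
    by_cases hr : r ∈ Set.Ioc a b
    · rw [Set.indicator_of_mem hr]
    · rw [Set.indicator_of_notMem hr]
      exact h0 r (fun hmem => hr (Set.Ioo_subset_Ioc_self hmem))
  rw [setIntegral_congr_fun measurableSet_Ioi he, setIntegral_indicator measurableSet_Ioc]
  have hss : Set.Ioi (0:ℝ) ∩ Set.Ioc a b = Set.Ioc a b :=
    Set.inter_eq_right.mpr (fun r hr => lt_trans ha hr.1)
  rw [hss]

/-- Virial (repulsivity) identity for radial Schrödinger operators with inverse-square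
potentials on `ℝ²`: `Re ∫ (Hf) conj(Λf) r dr = ∫ |∂_r f|² r dr + ∫ (V − r∂_rV/2)|f|²/r² r dr`,
and the resulting positivity when `r∂_rV ≤ 0` and `V ≥ 0`. -/
theorem virial_identity (V : ℝ → ℝ) (f Hf Λf : ℝ → ℂ)
    (hV : ContDiffOn ℝ 1 V (Set.Ioi 0))
    (hf : ContDiff ℝ (⊤ : ℕ∞) f) (hcs : HasCompactSupport f) (hsupp : tsupport f ⊆ Set.Ioi 0)
    (hH : ∀ r : ℝ, Hf r = -deriv (deriv f) r - r⁻¹ • deriv f r + ((V r / r ^ 2) • f r))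
    (hΛ : ∀ r : ℝ, Λf r = f r + r • deriv f r) :
    (∫ r in Set.Ioi (0:ℝ), Hf r * (starRingEnd ℂ) (Λf r) * (r : ℂ)).re
      = (∫ r in Set.Ioi (0:ℝ), ‖deriv f r‖ ^ 2 * r)
        + (∫ r in Set.Ioi (0:ℝ), (V r - r * deriv V r / 2) * (‖f r‖ ^ 2 / r ^ 2) * r) ∧
    ((∀ r ∈ Set.Ioi (0:ℝ), r * deriv V r ≤ 0 ∧ 0 ≤ V r) →
      ((∫ r in Set.Ioi (0:ℝ), ‖deriv f r‖ ^ 2 * r)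
          + (∫ r in Set.Ioi (0:ℝ), V r * (‖f r‖ ^ 2 / r ^ 2) * r)
        ≤ (∫ r in Set.Ioi (0:ℝ), Hf r * (starRingEnd ℂ) (Λf r) * (r : ℂ)).re ∧
       0 ≤ (∫ r in Set.Ioi (0:ℝ), ‖deriv f r‖ ^ 2 * r)
          + (∫ r in Set.Ioi (0:ℝ), V r * (‖f r‖ ^ 2 / r ^ 2) * r))) := by
  classical
  -- pick an interval [a,b] ⊆ (0,∞) containing the support
  obtain ⟨a, b, ha, hab, hsub⟩ : ∃ a b : ℝ, 0 < a ∧ a < b ∧ tsupport f ⊆ Set.Ioo a b := by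
    rcases (tsupport f).eq_empty_or_nonempty with h | h
    · exact ⟨1, 2, one_pos, one_lt_two, by simp [h]⟩
    · obtain ⟨m, hm⟩ := hcs.exists_isLeast h
      obtain ⟨M, hM⟩ := hcs.exists_isGreatest h
      have hm0 : 0 < m := hsupp hm.1
      refine ⟨m / 2, M + 1, by linarith, ?_, ?_⟩
      · have : m ≤ M := hm.2 hM.1
        linarith
      · intro r hr
        exact ⟨by have := hm.2 hr; linarith, by have := hM.2 hr; linarith⟩
  have hIcc : Set.Icc a b ⊆ Set.Ioi 0 := fun r hr => lt_of_lt_of_le ha hr.1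
  -- vanishing outside (a,b)
  have hzero : ∀ r ∉ Set.Ioo a b, f r = 0 ∧ deriv f r = 0 ∧ deriv (deriv f) r = 0 := by
    intro r hr
    have hts : ∀ g : ℝ → ℂ, tsupport (deriv g) ⊆ tsupport g := fun g =>
      closure_minimal support_deriv_subset isClosed_closure
    have h1 : r ∉ tsupport f := fun hmem => hr (hsub hmem)
    have h2 : r ∉ tsupport (deriv f) := fun hmem => h1 (hts f hmem)
    have h3 : r ∉ tsupport (deriv (deriv f)) := fun hmem => h2 (hts (deriv f) hmem)
    exact ⟨image_eq_zero_of_notMem_tsupport h1, image_eq_zero_of_notMem_tsupport h2,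
      image_eq_zero_of_notMem_tsupport h3⟩
  -- smoothness facts
  have hf0 : ContDiff ℝ ((⊤:ℕ∞):WithTop ℕ∞) f := hf.of_le (by simp)
  have hfd : Differentiable ℝ f := hf0.differentiable (by norm_num)
  have hf' : ContDiff ℝ ((⊤:ℕ∞):WithTop ℕ∞) (deriv f) := (contDiff_infty_iff_deriv.mp hf0).2
  have hfd' : Differentiable ℝ (deriv f) := hf'.differentiable (by norm_num)
  have hf'' : Continuous (deriv (deriv f)) := ((contDiff_infty_iff_deriv.mp hf').2).continuous
  have hVc : ContinuousOn V (Set.Ioi 0) := hV.continuousOn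
  have hV'c : ContinuousOn (deriv V) (Set.Ioi 0) :=
    hV.continuousOn_deriv_of_isOpen isOpen_Ioi le_rfl
  have hVd : ∀ r ∈ Set.Ioi (0:ℝ), HasDerivAt V (deriv V r) r := by
    intro r hr
    exact ((hV.differentiableOn one_ne_zero r hr).differentiableAt
      (isOpen_Ioi.mem_nhds hr)).hasDerivAt
  -- shorthand functions
  set x : ℝ → ℝ := fun r => (f r).re with hxdef
  set y : ℝ → ℝ := fun r => (f r).im with hydef
  set p : ℝ → ℝ := fun r => (deriv f r).re with hpdef
  set q : ℝ → ℝ := fun r => (deriv f r).im with hqdef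
  set s : ℝ → ℝ := fun r => (deriv (deriv f) r).re with hsdef
  set t : ℝ → ℝ := fun r => (deriv (deriv f) r).im with htdef
  set B : ℝ → ℝ := fun r =>
    -(r * (x r * p r + y r * q r)) - r ^ 2 * (p r ^ 2 + q r ^ 2) / 2
      + V r * (x r ^ 2 + y r ^ 2) / 2 with hBdef
  set φ : ℝ → ℝ := fun r =>
    -(x r * p r + y r * q r) - r * (p r ^ 2 + q r ^ 2 + x r * s r + y r * t r)
      - r * (p r ^ 2 + q r ^ 2) - r ^ 2 * (p r * s r + q r * t r)
      + deriv V r * (x r ^ 2 + y r ^ 2) / 2 + V r * (x r * p r + y r * q r) with hφdef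
  set F₁ : ℝ → ℝ := fun r => ‖deriv f r‖ ^ 2 * r with hF₁def
  set F₂ : ℝ → ℝ := fun r => (V r - r * deriv V r / 2) * (‖f r‖ ^ 2 / r ^ 2) * r with hF₂def
  set F₃ : ℝ → ℝ := fun r => V r * (‖f r‖ ^ 2 / r ^ 2) * r with hF₃def
  set G : ℝ → ℂ := fun r => Hf r * (starRingEnd ℂ) (Λf r) * (r : ℂ) with hGdef
  -- derivative of B
  have hB : ∀ r ∈ Set.Ioi (0:ℝ), HasDerivAt B (φ r) r := by
    intro r hr
    have hx : HasDerivAt x (p r) r := hasDerivAt_cre (hfd r).hasDerivAt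
    have hy : HasDerivAt y (q r) r := hasDerivAt_cim (hfd r).hasDerivAt
    have hp : HasDerivAt p (s r) r := hasDerivAt_cre (hfd' r).hasDerivAt
    have hq : HasDerivAt q (t r) r := hasDerivAt_cim (hfd' r).hasDerivAt
    have hVr : HasDerivAt V (deriv V r) r := hVd r hr
    have hid : HasDerivAt (fun u : ℝ => u) 1 r := hasDerivAt_id r
    have h1 : HasDerivAt (fun u => x u * p u + y u * q u)
        (p r * p r + x r * s r + (q r * q r + y r * t r)) r := (hx.mul hp).add (hy.mul hq)
    have h2 : HasDerivAt (fun u : ℝ => u * (x u * p u + y u * q u))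
        (1 * (x r * p r + y r * q r) + r * (p r * p r + x r * s r + (q r * q r + y r * t r)))
        r := hid.mul h1
    have h3 : HasDerivAt (fun u => p u ^ 2 + q u ^ 2)
        (2 * p r ^ 1 * s r + 2 * q r ^ 1 * t r) r := (hp.pow 2).add (hq.pow 2)
    have h4 : HasDerivAt (fun u : ℝ => u ^ 2) (2 * r ^ 1 * 1) r := hid.pow 2
    have h5 : HasDerivAt (fun u : ℝ => u ^ 2 * (p u ^ 2 + q u ^ 2))
        ((2 * r ^ 1 * 1) * (p r ^ 2 + q r ^ 2) + r ^ 2 * (2 * p r ^ 1 * s r + 2 * q r ^ 1 * t r))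
        r := h4.mul h3
    have h6 : HasDerivAt (fun u => x u ^ 2 + y u ^ 2)
        (2 * x r ^ 1 * p r + 2 * y r ^ 1 * q r) r := (hx.pow 2).add (hy.pow 2)
    have h7 : HasDerivAt (fun u => V u * (x u ^ 2 + y u ^ 2))
        (deriv V r * (x r ^ 2 + y r ^ 2) + V r * (2 * x r ^ 1 * p r + 2 * y r ^ 1 * q r)) r :=
      hVr.mul h6
    have := ((h2.neg.sub (h5.div_const 2)).add (h7.div_const 2))
    convert this using 1
    · rfl
    · rfl
    · rfl
    simp only [hφdef]
    ring
  -- pointwise identity on (0,∞)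
  have hpt : ∀ r ∈ Set.Ioi (0:ℝ), (G r).re = F₁ r + F₂ r + φ r := by
    intro r hr
    have hr0 : (r : ℝ) ≠ 0 := ne_of_gt hr
    simp only [hGdef, hH, hΛ, hF₁def, hF₂def, hφdef, hxdef, hydef, hpdef, hqdef, hsdef, htdef,
      cnorm_sq, Complex.real_smul, Complex.ofReal_div, Complex.ofReal_inv]
    simp only [map_add, map_mul, map_sub, map_neg, Complex.conj_ofReal, map_inv₀,
      Complex.mul_re, Complex.mul_im, Complex.add_re, Complex.add_im, Complex.sub_re,
      Complex.sub_im, Complex.neg_re, Complex.neg_im, Complex.inv_re, Complex.inv_im,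
      Complex.ofReal_re, Complex.ofReal_im, Complex.conj_re, Complex.conj_im,
      Complex.normSq_ofReal, Complex.normSq_apply, Complex.div_re, Complex.div_im]
    field_simp
    ring
  -- integrability
  have hGc : ContinuousOn G (Set.Icc a b) := by
    have : ContinuousOn G (Set.Ioi 0) := by
      apply ContinuousOn.mul
      apply ContinuousOn.mul
      · have : ContinuousOn Hf (Set.Ioi 0) := by
          have : Set.EqOn Hf (fun r => -deriv (deriv f) r - r⁻¹ • deriv f r
              + ((V r / r ^ 2) • f r)) (Set.Ioi 0) := fun r _ => hH r
          refine ContinuousOn.congr ?_ this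
          apply ContinuousOn.add
          · apply ContinuousOn.sub
            · exact hf''.continuousOn.neg
            · exact ContinuousOn.smul
                (continuousOn_inv₀.mono (fun r hr => ne_of_gt hr)) hfd'.continuous.continuousOn
          · exact ContinuousOn.smul
              (hVc.div (continuousOn_pow 2) (fun r hr => pow_ne_zero 2 (ne_of_gt hr)))
              hfd.continuous.continuousOn
        exact this
      · have : ContinuousOn Λf (Set.Ioi 0) := by
          have : Set.EqOn Λf (fun r => f r + r • deriv f r) (Set.Ioi 0) := fun r _ => hΛ r
          refine ContinuousOn.congr ?_ this
          exact (hfd.continuous.continuousOn).add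
            (continuousOn_id.smul hfd'.continuous.continuousOn)
        exact Complex.continuous_conj.comp_continuousOn this
      · exact Complex.continuous_ofReal.comp_continuousOn continuousOn_id
    exact this.mono hIcc
  have hG0 : ∀ r ∉ Set.Ioo a b, G r = 0 := by
    intro r hr
    obtain ⟨h1, h2, h3⟩ := hzero r hr
    simp [hGdef, hΛ, h1, h2]
  have hGint : IntegrableOn G (Set.Ioi 0) := aux_integrableOn hGc hG0
  have hF₁c : ContinuousOn F₁ (Set.Icc a b) :=
    (((hfd'.continuous.norm.pow 2).mul continuous_id).continuousOn)
  have hF₁0 : ∀ r ∉ Set.Ioo a b, F₁ r = 0 := by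
    intro r hr; simp [hF₁def, (hzero r hr).2.1]
  have hF₂c : ContinuousOn F₂ (Set.Icc a b) := by
    have : ContinuousOn F₂ (Set.Ioi 0) := by
      apply ContinuousOn.mul
      apply ContinuousOn.mul
      · exact hVc.sub ((continuousOn_id.mul hV'c).div_const 2)
      · exact (hfd.continuous.norm.pow 2).continuousOn.div (continuousOn_pow 2)
          (fun r hr => pow_ne_zero 2 (ne_of_gt hr))
      · exact continuousOn_id
    exact this.mono hIcc
  have hF₂0 : ∀ r ∉ Set.Ioo a b, F₂ r = 0 := by
    intro r hr; simp [hF₂def, (hzero r hr).1]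
  have hF₃c : ContinuousOn F₃ (Set.Icc a b) := by
    have : ContinuousOn F₃ (Set.Ioi 0) := by
      apply ContinuousOn.mul
      apply ContinuousOn.mul
      · exact hVc
      · exact (hfd.continuous.norm.pow 2).continuousOn.div (continuousOn_pow 2)
          (fun r hr => pow_ne_zero 2 (ne_of_gt hr))
      · exact continuousOn_id
    exact this.mono hIcc
  have hF₃0 : ∀ r ∉ Set.Ioo a b, F₃ r = 0 := by
    intro r hr; simp [hF₃def, (hzero r hr).1]
  have hφc : ContinuousOn φ (Set.Icc a b) := by
    have : ContinuousOn φ (Set.Ioi 0) := by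
      have cx : Continuous x := Complex.continuous_re.comp hfd.continuous
      have cy : Continuous y := Complex.continuous_im.comp hfd.continuous
      have cp : Continuous p := Complex.continuous_re.comp hfd'.continuous
      have cq : Continuous q := Complex.continuous_im.comp hfd'.continuous
      have cs : Continuous s := Complex.continuous_re.comp hf''
      have ct : Continuous t := Complex.continuous_im.comp hf''
      apply ContinuousOn.add
      apply ContinuousOn.add
      apply ContinuousOn.sub
      apply ContinuousOn.sub
      apply ContinuousOn.sub
      · exact ((cx.mul cp).add (cy.mul cq)).continuousOn.neg
      · exact continuousOn_id.mul
          (((((cp.pow 2).add (cq.pow 2)).add (cx.mul cs)).add (cy.mul ct)).continuousOn)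
      · exact continuousOn_id.mul ((cp.pow 2).add (cq.pow 2)).continuousOn
      · exact (continuousOn_pow 2).mul ((cp.mul cs).add (cq.mul ct)).continuousOn
      · exact (hV'c.mul ((cx.pow 2).add (cy.pow 2)).continuousOn).div_const 2
      · exact hVc.mul ((cx.mul cp).add (cy.mul cq)).continuousOn
    exact this.mono hIcc
  -- reduce to interval integrals
  have redG : (∫ r in Set.Ioi (0:ℝ), G r) = ∫ r in a..b, G r :=
    aux_setIntegral ha hab.le hG0
  have redF₁ : (∫ r in Set.Ioi (0:ℝ), F₁ r) = ∫ r in a..b, F₁ r :=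
    aux_setIntegral ha hab.le hF₁0
  have redF₂ : (∫ r in Set.Ioi (0:ℝ), F₂ r) = ∫ r in a..b, F₂ r :=
    aux_setIntegral ha hab.le hF₂0
  -- main equality
  have huIcc : Set.uIcc a b = Set.Icc a b := Set.uIcc_of_le hab.le
  have hintφ : IntervalIntegrable φ volume a b := by
    rw [intervalIntegrable_iff_integrableOn_Icc_of_le hab.le]
    exact hφc.integrableOn_compact isCompact_Icc
  have hintF₁ : IntervalIntegrable F₁ volume a b := by
    rw [intervalIntegrable_iff_integrableOn_Icc_of_le hab.le]
    exact hF₁c.integrableOn_compact isCompact_Icc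
  have hintF₂ : IntervalIntegrable F₂ volume a b := by
    rw [intervalIntegrable_iff_integrableOn_Icc_of_le hab.le]
    exact hF₂c.integrableOn_compact isCompact_Icc
  have hφint : (∫ r in a..b, φ r) = 0 := by
    rw [intervalIntegral.integral_eq_sub_of_hasDerivAt
      (fun r hr => hB r (hIcc (huIcc ▸ hr))) hintφ]
    have hBa : B a = 0 := by
      obtain ⟨h1, h2, _⟩ := hzero a (by simp)
      simp [hBdef, hxdef, hydef, hpdef, hqdef, h1, h2]
    have hBb : B b = 0 := by
      obtain ⟨h1, h2, _⟩ := hzero b (by simp)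
      simp [hBdef, hxdef, hydef, hpdef, hqdef, h1, h2]
    rw [hBa, hBb, sub_zero]
  have hmain : (∫ r in Set.Ioi (0:ℝ), G r).re
      = (∫ r in Set.Ioi (0:ℝ), F₁ r) + (∫ r in Set.Ioi (0:ℝ), F₂ r) := by
    have h1 : (∫ r in Set.Ioi (0:ℝ), G r).re = ∫ r in Set.Ioi (0:ℝ), (G r).re := by
      rw [← RCLike.re_to_complex]
      exact (integral_re hGint).symm
    rw [h1]
    have h2 : (∫ r in Set.Ioi (0:ℝ), (G r).re) = ∫ r in a..b, (G r).re := by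
      apply aux_setIntegral ha hab.le
      intro r hr; rw [hG0 r hr]; simp
    rw [h2, redF₁, redF₂]
    have h3 : (∫ r in a..b, (G r).re) = ∫ r in a..b, (F₁ r + F₂ r + φ r) := by
      apply intervalIntegral.integral_congr
      intro r hr
      exact hpt r (hIcc (huIcc ▸ hr))
    rw [h3, intervalIntegral.integral_add (hintF₁.add hintF₂) hintφ,
      intervalIntegral.integral_add hintF₁ hintF₂, hφint, add_zero]
  refine ⟨hmain, fun hpos => ?_⟩
  have hF₁nonneg : 0 ≤ ∫ r in Set.Ioi (0:ℝ), F₁ r := by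
    apply setIntegral_nonneg measurableSet_Ioi
    intro r hr
    exact mul_nonneg (pow_nonneg (norm_nonneg _) 2) (le_of_lt hr)
  have hF₃nonneg : 0 ≤ ∫ r in Set.Ioi (0:ℝ), F₃ r := by
    apply setIntegral_nonneg measurableSet_Ioi
    intro r hr
    exact mul_nonneg (mul_nonneg (hpos r hr).2
      (div_nonneg (pow_nonneg (norm_nonneg _) 2) (pow_nonneg (le_of_lt hr) 2))) (le_of_lt hr)
  have hmono : (∫ r in Set.Ioi (0:ℝ), F₃ r) ≤ ∫ r in Set.Ioi (0:ℝ), F₂ r := by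
    apply setIntegral_mono_on (aux_integrableOn hF₃c hF₃0) (aux_integrableOn hF₂c hF₂0)
      measurableSet_Ioi
    intro r hr
    have h1 : V r ≤ V r - r * deriv V r / 2 := by
      have := (hpos r hr).1; linarith
    have h2 : 0 ≤ ‖f r‖ ^ 2 / r ^ 2 * r :=
      mul_nonneg (div_nonneg (pow_nonneg (norm_nonneg _) 2) (pow_nonneg (le_of_lt hr) 2))
        (le_of_lt hr)
    calc F₃ r = V r * (‖f r‖ ^ 2 / r ^ 2 * r) := by rw [hF₃def]; ring
    _ ≤ (V r - r * deriv V r / 2) * (‖f r‖ ^ 2 / r ^ 2 * r) := mul_le_mul_of_nonneg_right h1 h2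
    _ = F₂ r := by rw [hF₂def]; ring
  constructor
  · rw [hmain]
    exact add_le_add_right hmono _
  · exact add_nonneg hF₁nonneg hF₃nonneg
end

section
/- Let m ≥ 1 be an integer and let w : (0,∞) → ℝ be a smooth, real-valued, compactly supported function. Define A_θ[w](r) = −(1/2)∫₀^r w² r′dr′, D₊^{(w)} w := ∂_r w − ((m+A_θ[w])/r) w, and the adjoint linearized operator L_w* v := −∂_r v − (1/r)v − ((m+A_θ[w])/r)v + w(r)∫_r^∞ w(s) v(s) ds for real v. Then L_w*( (r/2) w ) = −(r/2) D₊^{(w)} w − ( m + 1 − (1/2)∫₀^∞ w² r dr ) w. -/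
open MeasureTheory intervalIntegral

/-- The adjoint identity `L_w*((r/2)w) = −(r/2)D₊^{(w)}w − (m+1 − (1/2)∫₀^∞ w² r dr) w`. -/
theorem adjoint_Lw_rw (m : ℕ) (hm : 1 ≤ m) (w A : ℝ → ℝ)
    (hw : ContDiff ℝ (⊤ : ℕ∞) w) (hcs : HasCompactSupport w) (hsupp : tsupport w ⊆ Set.Ioi 0)
    (hA : ∀ r : ℝ, A r = -(1/2) * ∫ t in (0:ℝ)..r, w t ^ 2 * t) :
    ∀ r : ℝ, 0 < r →
      -deriv (fun s => (s / 2) * w s) r - ((r / 2) * w r) / r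
        - (((m : ℝ) + A r) / r) * ((r / 2) * w r)
        + w r * (∫ s in Set.Ioi r, w s * ((s / 2) * w s))
      = -(r / 2) * (deriv w r - (((m : ℝ) + A r) / r) * w r)
        - ((m : ℝ) + 1 - (1/2) * ∫ s in Set.Ioi (0:ℝ), w s ^ 2 * s) * w r := by
  intro r hr
  have hw1 : Differentiable ℝ w := hw.differentiable (by simp)
  -- derivative
  have hd : deriv (fun s => (s / 2) * w s) r = (1/2) * w r + (r/2) * deriv w r := by
    have h1 : HasDerivAt (fun s : ℝ => s / 2) (1/2) r := by
      simpa using (hasDerivAt_id r).div_const 2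
    exact (h1.mul (hw1 r).hasDerivAt).deriv
  -- integrability of f s = w s ^ 2 * s
  set f : ℝ → ℝ := fun s => w s ^ 2 * s with hf_def
  have hfc : Continuous f := (hw.continuous.pow 2).mul continuous_id
  have hfcs : HasCompactSupport f := by
    apply HasCompactSupport.intro hcs.isCompact
    intro x hx
    have : w x = 0 := image_eq_zero_of_notMem_tsupport hx
    simp [f, this]
  have hfi : Integrable f := hfc.integrable_of_hasCompactSupport hfcs
  -- split the integral
  have hsplit : (∫ s in Set.Ioi (0:ℝ), f s)
      = (∫ s in Set.Ioc 0 r, f s) + ∫ s in Set.Ioi r, f s := by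
    rw [← setIntegral_union (Set.Ioc_disjoint_Ioi le_rfl) measurableSet_Ioi
      hfi.integrableOn hfi.integrableOn, Set.Ioc_union_Ioi_eq_Ioi hr.le]
  have hAr : A r = -(1/2) * ∫ s in Set.Ioc 0 r, f s := by
    rw [hA r, intervalIntegral.integral_of_le hr.le]
  have h2 : (∫ s in Set.Ioi r, w s * ((s / 2) * w s)) = (1/2) * ∫ s in Set.Ioi r, f s := by
    rw [← MeasureTheory.integral_const_mul]
    apply setIntegral_congr_fun measurableSet_Ioi
    intro s _
    simp only [f]
    ring
  rw [hd, h2, hsplit, hAr]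
  have hr0 : r ≠ 0 := hr.ne'
  field_simp
  ring
end
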